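/- arXiv:2410.16886 — 7 statements merged into one kernel-verified Lean document; each statement's English description precedes it below -/
import Mathlib

section
/- Let Γ be a set (regarded as a discrete topological space) and let X be a closed linear subspace of c₀(Γ). For every countable subset I ⊆ Γ there exists a countable subset J ⊆ Γ with I ⊆ J such that for every x ∈ X the pointwise product of x with the indicator function of J again belongs to X. -/
/-!
For a finite `s ⊆ Γ`, the image of `X` under `x ↦ ((x γ)_{γ ∈ s}, ‖x‖)` is separable, so some
countable `D_s ⊆ X` approximates every element of `X` on `s` with almost no increase of norm.
Close `I` up to a countable `J` containing the supports of all `D_s` with `s ⊆ J`.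

Given `x ∈ X` and `δ > 0`, this yields `d₀, d₁, … ∈ X` supported in `J`, each approximating `x`
on the finite set `{γ ∈ J | δ ≤ |x γ|}` and at every point where an earlier `dᵢ` was at least `δ`.
Hence at each point outside that finite set at most one `dⱼ` is large, and the Cesàro means of
the `dⱼ` converge uniformly to `x·1_J` (a hands-on Mazur lemma: `dⱼ → x·1_J` weakly). So `x·1_J`
lies in the closure of `X`, which is `X`.
-/

open scoped ZeroAtInfty
open Filter Topology

noncomputable section

/-- The pointwise product of `x ∈ c₀(Γ)` with the indicator function of `J ⊆ Γ`, as an element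
of `c₀(Γ)` (here `Γ` is discrete). -/
def c0Restrict {Γ : Type*} [TopologicalSpace Γ] [DiscreteTopology Γ] (x : C₀(Γ, ℝ))
    (J : Set Γ) : C₀(Γ, ℝ) where
  toFun := J.indicator ⇑x
  continuous_toFun := continuous_of_discreteTopology
  zero_at_infty' := by
    have h : Tendsto (fun γ => ‖x γ‖) (cocompact Γ) (𝓝 0) := by
      rw [← tendsto_zero_iff_norm_tendsto_zero]
      exact zero_at_infty x
    rw [tendsto_zero_iff_norm_tendsto_zero]
    refine squeeze_zero (fun γ => norm_nonneg _) (fun γ => ?_) h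
    by_cases hγ : γ ∈ J
    · simp [Set.indicator_of_mem hγ]
    · simp [Set.indicator_of_notMem hγ]

open Set Finset Function

theorem Set.Countable.exists_countable_superset_finitary_closed {α : Type*} {I : Set α}
    (hI : I.Countable) (T : Finset α → Set α) (hT : ∀ s, (T s).Countable) :
    ∃ J, J.Countable ∧ I ⊆ J ∧ ∀ s : Finset α, ↑s ⊆ J → T s ⊆ J := by
  let step (S : Set α) : Set α := S ∪ ⋃ s ∈ {s : Finset α | ↑s ⊆ S}, T s
  let Js (n : ℕ) : Set α := step^[n] I
  have hJs_succ (n : ℕ) : Js (n + 1) = step (Js n) := iterate_succ_apply' step n I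
  have hmono : Monotone Js := monotone_nat_of_le_succ fun n => by
    rw [hJs_succ]; exact subset_union_left
  have hcount (n : ℕ) : (Js n).Countable := by
    induction n with
    | zero => exact hI
    | succ n ih =>
      have hfin : {s : Finset α | ↑s ⊆ Js n}.Countable :=
        ((countable_ofPred_finite_subset ih).preimage Finset.coe_injective).mono
          fun s hs => show (s : Set α).Finite ∧ _ from ⟨s.finite_toSet, hs⟩
      rw [hJs_succ]
      exact ih.union (hfin.biUnion fun s _ => hT s)
  refine ⟨⋃ n, Js n, countable_iUnion hcount, subset_iUnion Js 0, fun s hs => ?_⟩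
  obtain ⟨n, hn⟩ := hmono.directed_le.exists_mem_subset_of_finset_subset_biUnion hs
  calc T s ⊆ step (Js n) := subset_union_right.trans' (subset_biUnion_of_mem (u := T) hn)
    _ = Js (n + 1) := (hJs_succ n).symm
    _ ⊆ ⋃ n, Js n := subset_iUnion Js (n + 1)

theorem norm_sum_le_of_at_most_one_large {ι E : Type*} [SeminormedAddCommGroup E] (s : Finset ι)
    (f : ι → E) {c M : ℝ} (hf : ∀ i ∈ s, ‖f i‖ ≤ M) (hcM : c ≤ M)
    (hone : ∀ i ∈ s, ∀ j ∈ s, i ≠ j → ‖f i‖ ≤ c ∨ ‖f j‖ ≤ c) :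
    ‖∑ i ∈ s, f i‖ ≤ (#s - 1) * c + M := by
  classical
  refine (norm_sum_le s f).trans ?_
  by_cases hlarge : ∃ i ∈ s, c < ‖f i‖
  · obtain ⟨i, hi, hci⟩ := hlarge
    have hrest : ∀ j ∈ s.erase i, ‖f j‖ ≤ c := fun j hj =>
      (hone i hi j (mem_of_mem_erase hj) (ne_of_mem_erase hj).symm).resolve_left hci.not_ge
    rw [← add_sum_erase s _ hi]
    calc ‖f i‖ + ∑ j ∈ s.erase i, ‖f j‖ ≤ M + #(s.erase i) • c :=
          add_le_add (hf i hi) (sum_le_card_nsmul _ _ _ hrest)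
      _ = (#s - 1) * c + M := by
          rw [card_erase_of_mem hi, nsmul_eq_mul, Nat.cast_sub (card_pos.2 ⟨i, hi⟩)]
          push_cast; ring
  · push Not at hlarge
    calc ∑ i ∈ s, ‖f i‖ ≤ #s • c := sum_le_card_nsmul _ _ _ hlarge
      _ ≤ (#s - 1) * c + M := by rw [nsmul_eq_mul]; linarith

namespace ZeroAtInftyContinuousMap

variable {Γ : Type*} [TopologicalSpace Γ]

theorem norm_apply_le {β : Type*} [SeminormedAddCommGroup β] (f : C₀(Γ, β)) (γ : Γ) :
    ‖f γ‖ ≤ ‖f‖ := by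
  rw [← norm_toBCF_eq_norm]
  exact f.toBCF.norm_coe_le_norm γ

theorem norm_le_of_forall {β : Type*} [SeminormedAddCommGroup β] {f : C₀(Γ, β)} {C : ℝ} (hC : 0 ≤ C) (h : ∀ γ, ‖f γ‖ ≤ C) :
    ‖f‖ ≤ C := by
  rw [← norm_toBCF_eq_norm]
  exact (BoundedContinuousFunction.norm_le hC).2 h

theorem sum_apply {β ι : Type*} [TopologicalSpace β] [AddCommMonoid β] [ContinuousAdd β]
    (s : Finset ι) (f : ι → C₀(Γ, β)) (γ : Γ) : (∑ i ∈ s, f i) γ = ∑ i ∈ s, f i γ :=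
  map_sum (⟨⟨fun f : C₀(Γ, β) => f γ, rfl⟩, fun _ _ => rfl⟩ : C₀(Γ, β) →+ β) f s

theorem exists_countable_approx (X : Set C₀(Γ, ℝ)) (s : Finset Γ) :
    ∃ D ⊆ X, D.Countable ∧
      ∀ x ∈ X, ∀ ε > 0, ∃ d ∈ D, (∀ γ ∈ s, ‖d γ - x γ‖ < ε) ∧ ‖d‖ < ‖x‖ + ε := by
  let Φ (x : C₀(Γ, ℝ)) : (s → ℝ) × ℝ := (fun γ => x γ, ‖x‖)
  obtain ⟨t, htX, htc, hXt⟩ :=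
    (TopologicalSpace.IsSeparable.of_separableSpace (Φ '' X)).exists_countable_dense_subset
  choose g hgX hg using fun y : t => htX y.2
  have := htc.to_subtype
  refine ⟨range g, range_subset_iff.2 hgX, countable_range g, fun x hx ε hε => ?_⟩
  obtain ⟨y, hyt, hxy⟩ := Metric.mem_closure_iff.1 (hXt (mem_image_of_mem Φ hx)) ε hε
  refine ⟨g ⟨y, hyt⟩, mem_range_self _, ?_⟩
  obtain hgy : Φ (g ⟨y, hyt⟩) = y := hg ⟨y, hyt⟩
  rw [← hgy, Prod.dist_eq, max_lt_iff, dist_pi_lt_iff hε] at hxy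
  refine ⟨fun γ hγ => ?_, ?_⟩
  · simpa [Φ, dist_eq_norm, norm_sub_rev] using hxy.1 ⟨γ, hγ⟩
  · linarith [abs_sub_lt_iff.1 (Real.dist_eq _ _ ▸ hxy.2)]

variable [DiscreteTopology Γ]

theorem tendsto_cofinite (f : C₀(Γ, ℝ)) : Tendsto f cofinite (𝓝 0) :=
  cocompact_eq_cofinite Γ ▸ zero_at_infty f

theorem finite_setOf_le_norm (f : C₀(Γ, ℝ)) {ε : ℝ} (hε : 0 < ε) : {γ | ε ≤ ‖f γ‖}.Finite := by
  simpa [eventually_cofinite] using f.tendsto_cofinite.eventually (Metric.ball_mem_nhds 0 hε)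

theorem countable_support (f : C₀(Γ, ℝ)) : (support f).Countable := by
  have h := f.tendsto_cofinite.countable_compl_preimage_ker
  rwa [ker_nhds] at h

end ZeroAtInftyContinuousMap

section Approximation

variable {Γ : Type*} [TopologicalSpace Γ]

def ApproxSupportedIn (X : Set C₀(Γ, ℝ)) (J : Set Γ) : Prop :=
  ∀ s : Finset Γ, ↑s ⊆ J → ∀ x ∈ X, ∀ ε > 0,
    ∃ d ∈ X, support d ⊆ J ∧ (∀ γ ∈ s, ‖d γ - x γ‖ < ε) ∧ ‖d‖ < ‖x‖ + ε

variable [DiscreteTopology Γ] {X : Set C₀(Γ, ℝ)} {J : Set Γ} {x : C₀(Γ, ℝ)}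

theorem ApproxSupportedIn.exists_seq (hJ : ApproxSupportedIn X J) (hx : x ∈ X) {F : Finset Γ}
    (hF : ↑F ⊆ J) {δ : ℝ} (hδ : 0 < δ) :
    ∃ d : ℕ → C₀(Γ, ℝ), ∀ j, d j ∈ X ∧ support (d j) ⊆ J ∧ ‖d j‖ < ‖x‖ + δ ∧
      ∀ γ, (γ ∈ F ∨ ∃ i < j, δ ≤ ‖d i γ‖) → ‖d j γ - x γ‖ < δ := by
  classical
  choose pick hpickX hpickJ hpick hpick_norm using
    fun s : {s : Finset Γ // ↑s ⊆ J} => hJ s s.2 x hx δ hδ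
  let large (s : {s : Finset Γ // ↑s ⊆ J}) : Finset Γ :=
    ((pick s).finite_setOf_le_norm hδ).toFinset
  have hlarge (s) : ↑(large s) ⊆ J := fun γ hγ => hpickJ s <| by
    have : δ ≤ ‖pick s γ‖ := by simpa [large] using hγ
    exact norm_ne_zero_iff.1 (hδ.trans_le this).ne'
  let step (s : {s : Finset Γ // ↑s ⊆ J}) : {s : Finset Γ // ↑s ⊆ J} :=
    ⟨s.1 ∪ large s, by rw [coe_union]; exact union_subset s.2 (hlarge s)⟩
  let S (j : ℕ) := step^[j] ⟨F, hF⟩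
  have hS_succ (j : ℕ) : S (j + 1) = step (S j) := iterate_succ_apply' step j _
  have hmono : Monotone fun j => (S j).1 := monotone_nat_of_le_succ fun j => by
    rw [hS_succ]; exact Finset.subset_union_left
  refine ⟨fun j => pick (S j), fun j => ⟨hpickX _, hpickJ _, hpick_norm _, ?_⟩⟩
  rintro γ (hγ | ⟨i, hij, hi⟩)
  · exact hpick _ γ (hmono (Nat.zero_le j) hγ)
  · refine hpick _ γ (hmono hij ?_)
    change γ ∈ (S (i + 1)).1
    rw [hS_succ]
    exact mem_union_right _ (by simpa [large] using hi)

theorem ApproxSupportedIn.exists_mem_norm_sub_le (hXc : Convex ℝ X) (hJ : ApproxSupportedIn X J)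
    (hx : x ∈ X) {δ : ℝ} (hδ : 0 < δ) : ∃ z ∈ X, ‖c0Restrict x J - z‖ ≤ 4 * δ := by
  classical
  let F : Finset Γ := (x.finite_setOf_le_norm hδ).toFinset.filter (· ∈ J)
  obtain ⟨d, hd⟩ := hJ.exists_seq hx (F := F) (fun γ hγ => (mem_filter.1 hγ).2) hδ
  obtain ⟨k, hk⟩ := exists_nat_gt ((‖x‖ + 2 * δ) / δ)
  have hk0 : (0 : ℝ) < k := lt_trans (by positivity) hk
  have hxk : ‖x‖ + 2 * δ < k * δ := (div_lt_iff₀ hδ).1 hk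
  have hw : ∑ _j ∈ range k, (k : ℝ)⁻¹ = 1 := by simp [hk0.ne']
  refine ⟨∑ j ∈ range k, (k : ℝ)⁻¹ • d j,
    hXc.sum_mem (fun _ _ => by positivity) hw fun j _ => (hd j).1, ?_⟩
  refine ZeroAtInftyContinuousMap.norm_le_of_forall (by positivity) fun γ => ?_
  simp only [ZeroAtInftyContinuousMap.sub_apply, ZeroAtInftyContinuousMap.sum_apply,
    ZeroAtInftyContinuousMap.smul_apply]
  change ‖J.indicator x γ - _‖ ≤ _
  by_cases hγJ : γ ∈ J
  swap
  · have hd0 (j : ℕ) : d j γ = 0 := notMem_support.1 fun h => hγJ ((hd j).2.1 h)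
    simp [hγJ, hd0, hδ.le]
  rw [indicator_of_mem hγJ, ← dist_eq_norm, dist_comm]
  by_cases hγF : δ ≤ ‖x γ‖
  · have hF : γ ∈ F := by
      simp only [F, mem_filter, Set.Finite.mem_toFinset, mem_ofPred_eq]
      exact ⟨hγF, hγJ⟩
    have hmean : ∑ j ∈ range k, (k : ℝ)⁻¹ • d j γ ∈ Metric.closedBall (x γ) δ :=
      (convex_closedBall _ _).sum_mem (fun _ _ => by positivity) hw fun j _ =>
        Metric.mem_closedBall.2 (dist_eq_norm (d j γ) (x γ) ▸ (hd j).2.2.2 γ (Or.inl hF)).le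
    linarith [Metric.mem_closedBall.1 hmean]
  · push Not at hγF
    have hone (i j : ℕ) (hij : i < j) : ‖d i γ‖ ≤ 2 * δ ∨ ‖d j γ‖ ≤ 2 * δ := by
      by_contra! h
      have := (hd j).2.2.2 γ (Or.inr ⟨i, hij, by linarith⟩)
      linarith [norm_sub_norm_le (d j γ) (x γ)]
    have hsum := norm_sum_le_of_at_most_one_large (range k) (fun j => d j γ) (M := ‖x‖ + 2 * δ)
      (fun j _ => ((d j).norm_apply_le γ).trans (by linarith [(hd j).2.2.1]))
      (by linarith [norm_nonneg x])
      fun i _ j _ hij => (lt_or_gt_of_ne hij).elim (hone i j) fun h => (hone j i h).symm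
    rw [card_range] at hsum
    have hmean : ‖∑ j ∈ range k, (k : ℝ)⁻¹ • d j γ‖ ≤ 3 * δ := by
      rw [← smul_sum, norm_smul, norm_inv, Real.norm_natCast, inv_mul_le_iff₀ hk0]
      linarith
    linarith [dist_le_norm_add_norm (∑ j ∈ range k, (k : ℝ)⁻¹ • d j γ) (x γ)]

theorem ApproxSupportedIn.c0Restrict_mem_closure (hXc : Convex ℝ X)
    (hJ : ApproxSupportedIn X J) (hx : x ∈ X) : c0Restrict x J ∈ closure X := by
  refine Metric.mem_closure_iff.2 fun ε hε => ?_
  obtain ⟨z, hzX, hz⟩ := hJ.exists_mem_norm_sub_le hXc hx (δ := ε / 5) (by positivity)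
  exact ⟨z, hzX, by rw [dist_eq_norm]; linarith⟩

end Approximation

/-- Johnson–Zippin claim for `c₀(Γ)`: every countable `I ⊆ Γ` is contained in a countable
`J ⊆ Γ` such that `x·1_J ∈ X` for every `x` in the closed subspace `X`. -/
theorem exists_countable_restriction_invariant_c0 {Γ : Type*} [TopologicalSpace Γ]
    [DiscreteTopology Γ] (X : Submodule ℝ C₀(Γ, ℝ)) (hX : IsClosed (X : Set C₀(Γ, ℝ)))
    (I : Set Γ) (hI : I.Countable) :
    ∃ J : Set Γ, J.Countable ∧ I ⊆ J ∧ ∀ x ∈ X, c0Restrict x J ∈ X := by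
  choose D hDX hDc hD using ZeroAtInftyContinuousMap.exists_countable_approx (X : Set C₀(Γ, ℝ))
  obtain ⟨J, hJc, hIJ, hJ⟩ := hI.exists_countable_superset_finitary_closed
    (fun s => ⋃ d ∈ D s, support d) fun s => (hDc s).biUnion fun d _ => d.countable_support
  refine ⟨J, hJc, hIJ, fun x hx => hX.closure_subset (ApproxSupportedIn.c0Restrict_mem_closure
    X.convex (fun s hs y hy ε hε => ?_) hx)⟩
  obtain ⟨d, hdD, hd⟩ := hD s y hy ε hε
  exact ⟨d, hDX s hdD, (subset_biUnion_of_mem hdD).trans (hJ s hs), hd⟩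

end
end

section
/- Let Γ be a set and let X be a closed linear subspace of ℓ₁(Γ) which is weak*-closed in the following sense: the set {x : Γ → ℝ | x is the underlying function of some element of X of norm ≤ 1} is closed in the product (pointwise convergence) topology on Γ → ℝ. Then there exists a partition 𝒥 of Γ into countable subsets such that for every x ∈ X and every J ∈ 𝒥 the restriction x·1_J belongs to X. -/
/-!
Call `J ⊆ Γ` invariant if `x·1_J ∈ X` for every `x ∈ X`. Invariant sets form a Boolean algebra,
and weak*-closedness makes them closed under increasing countable unions (`x·1_{J_n} → x·1_J`
pointwise with norms at most `‖x‖`), so they form a σ-algebra.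

Every point lies in a countable invariant set. For countable `C`, the restrictions to `C` of the
unit ball of `X` live in the second countable space `ℝ^C`, so countably many elements of the ball
approximate all of them on `C`; adding their (countable) supports to `C` and iterating `ω` times
gives a countable `C` such that each `x·1_C` is a pointwise limit of elements of the unit ball of
`X`, hence lies in `X`. The atoms of the σ-algebra are then the required countable sets.
-/

open scoped ENNReal

noncomputable section

theorem memℓp_indicator {Γ : Type*} {p : ℝ≥0∞} {f : Γ → ℝ} (hf : Memℓp f p) (J : Set Γ) :
    Memℓp (J.indicator f) p := by
  rcases p.trichotomy with (rfl | rfl | hp)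
  · apply memℓp_zero
    refine hf.finite_dsupport.subset fun i hi => ?_
    simp only [Set.mem_setOf_eq] at hi ⊢
    intro h
    exact hi (by simp [Set.indicator_apply, h])
  · apply memℓp_infty
    obtain ⟨C, hC⟩ := hf.bddAbove
    refine ⟨C, ?_⟩
    rintro - ⟨i, rfl⟩
    by_cases h : i ∈ J
    · simpa [Set.indicator_of_mem h] using hC (Set.mem_range_self i)
    · simp only [Set.indicator_of_notMem h, norm_zero]
      exact le_trans (norm_nonneg (f i)) (hC (Set.mem_range_self i))
  · apply memℓp_gen
    refine Summable.of_nonneg_of_le (fun i => Real.rpow_nonneg (norm_nonneg _) _)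
      (fun i => ?_) (hf.summable hp)
    by_cases h : i ∈ J
    · simp [Set.indicator_of_mem h]
    · simp only [Set.indicator_of_notMem h, norm_zero, Real.zero_rpow hp.ne']
      positivity

/-- The paper's `x·1_J`. -/
def lpRestrict {Γ : Type*} {p : ℝ≥0∞} (x : lp (fun _ : Γ => ℝ) p) (J : Set Γ) :
    lp (fun _ : Γ => ℝ) p :=
  ⟨J.indicator ⇑x, memℓp_indicator (lp.memℓp x) J⟩

open Filter Topology Set

section PointwiseTopology

theorem exists_countable_subset_image_subset_closure_image {α Y : Type*} [TopologicalSpace Y]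
    [SecondCountableTopology Y] (g : α → Y) (A : Set α) :
    ∃ D ⊆ A, D.Countable ∧ g '' A ⊆ closure (g '' D) := by
  obtain ⟨t, htc, htd⟩ := TopologicalSpace.exists_countable_dense (g '' A)
  choose a haA hga using fun y : g '' A => y.2
  have hgt : g '' (a '' t) = Subtype.val '' t := by
    rw [image_image]
    exact image_congr fun y _ => hga y
  refine ⟨a '' t, image_subset_iff.2 fun y _ => haA y, htc.image a, ?_⟩
  rw [hgt]
  exact fun y hy => closure_subtype.1 (htd ⟨y, hy⟩)

variable {Γ E : Type*} [TopologicalSpace E] [Zero E]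

theorem exists_countable_subset_indicator_image_subset_closure [SecondCountableTopology E]
    {C : Set Γ} (hC : C.Countable) (A : Set (Γ → E)) :
    ∃ D ⊆ A, D.Countable ∧ C.indicator '' A ⊆ closure (C.indicator '' D) := by
  classical
  have := hC.to_subtype
  obtain ⟨D, hDA, hDc, hD⟩ := exists_countable_subset_image_subset_closure_image C.domRestrict A
  let extend : (C → E) → Γ → E := fun g i => if h : i ∈ C then g ⟨i, h⟩ else 0
  have hextend : Continuous extend := continuous_pi fun i => by
    by_cases h : i ∈ C
    · simpa [extend, h] using continuous_apply (⟨i, h⟩ : C)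
    · simpa [extend, h] using continuous_const
  have hcomp : ∀ f : Γ → E, extend (C.domRestrict f) = C.indicator f := fun f => by
    ext i
    by_cases h : i ∈ C <;> simp [extend, h]
  refine ⟨D, hDA, hDc, ?_⟩
  calc C.indicator '' A = extend '' (C.domRestrict '' A) := by simp [image_image, hcomp]
    _ ⊆ extend '' closure (C.domRestrict '' D) := image_mono hD
    _ ⊆ closure (extend '' (C.domRestrict '' D)) := image_closure_subset_closure_image hextend
    _ = closure (C.indicator '' D) := by simp [image_image, hcomp]

theorem mem_closure_of_forall_indicator_mem_closure {C : ℕ → Set Γ} (hC : Monotone C)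
    {A : Set (Γ → E)} {f : Γ → E} (hA : ∀ a ∈ A, a.support ⊆ ⋃ n, C n)
    (hf : f.support ⊆ ⋃ n, C n) (h : ∀ n, (C n).indicator f ∈ closure ((C n).indicator '' A)) :
    f ∈ closure A := by
  -- A basic neighbourhood of `f` constrains finitely many coordinates: those in `⋃ n, C n` lie in
  -- a single `C n`, and outside `⋃ n, C n` both `f` and the elements of `A` vanish.
  refine mem_closure_iff_nhds.2 fun U hU => ?_
  rw [nhds_pi, Filter.mem_pi] at hU
  obtain ⟨I, hI, t, ht, hIt⟩ := hU
  obtain ⟨n, hn⟩ : ∃ n, I ∩ ⋃ n, C n ⊆ C n := by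
    simpa using hC.directed_le.exists_mem_subset_of_finset_subset_biUnion
      (s := (hI.inter_of_left (⋃ n, C n)).toFinset) (by simp)
  have hV : (I ∩ C n).pi t ∈ 𝓝 ((C n).indicator f) :=
    set_pi_mem_nhds (hI.inter_of_left _) fun i hi => by
      rw [indicator_of_mem hi.2]
      exact ht i
  obtain ⟨_, hat, a, ha, rfl⟩ := mem_closure_iff_nhds.1 (h n) _ hV
  refine ⟨a, hIt fun i hi => ?_, ha⟩
  by_cases hiC : i ∈ ⋃ n, C n
  · simpa [indicator_of_mem (hn ⟨hi, hiC⟩)] using hat i ⟨hi, hn ⟨hi, hiC⟩⟩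
  · rw [Function.support_subset_iff'.1 (hA a ha) i hiC, ← Function.support_subset_iff'.1 hf i hiC]
    exact mem_of_mem_nhds (ht i)

theorem exists_countable_superset_indicator_image_subset_closure [SecondCountableTopology E]
    {A : Set (Γ → E)} (hA : ∀ a ∈ A, a.support.Countable) {C : Set Γ} (hC : C.Countable) :
    ∃ C', C'.Countable ∧ C ⊆ C' ∧
      C.indicator '' A ⊆ closure (C.indicator '' {a ∈ A | a.support ⊆ C'}) := by
  obtain ⟨D, hDA, hDc, hD⟩ := exists_countable_subset_indicator_image_subset_closure hC A
  refine ⟨C ∪ ⋃ a ∈ D, a.support, hC.union (hDc.biUnion fun a ha => hA a (hDA ha)),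
    subset_union_left, hD.trans (closure_mono (image_mono fun a ha => ⟨hDA ha, ?_⟩))⟩
  exact (subset_biUnion_of_mem ha).trans subset_union_right

theorem exists_countable_mem_forall_indicator_mem_closure [SecondCountableTopology E]
    {A : Set (Γ → E)} (hA : ∀ a ∈ A, a.support.Countable) (γ : Γ) :
    ∃ C : Set Γ, C.Countable ∧ γ ∈ C ∧
      ∀ a ∈ A, C.indicator a ∈ closure {a ∈ A | a.support ⊆ C} := by
  choose next hnext_countable hnext_superset hnext_closure using
    fun C : {C : Set Γ // C.Countable} =>
      exists_countable_superset_indicator_image_subset_closure hA C.2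
  let step : {C : Set Γ // C.Countable} → {C : Set Γ // C.Countable} := fun C =>
    ⟨next C, hnext_countable C⟩
  let seq : ℕ → {C : Set Γ // C.Countable} := fun n => step^[n] ⟨{γ}, countable_singleton γ⟩
  have hseq_succ : ∀ n, (seq (n + 1)).1 = next (seq n) := fun n =>
    congrArg Subtype.val (Function.iterate_succ_apply' step n _)
  have hmono : Monotone fun n => (seq n).1 := monotone_nat_of_le_succ fun n =>
    (hseq_succ n).symm ▸ hnext_superset (seq n)
  refine ⟨⋃ n, (seq n).1, countable_iUnion fun n => (seq n).2, mem_iUnion.2 ⟨0, rfl⟩,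
    fun a ha => ?_⟩
  refine mem_closure_of_forall_indicator_mem_closure hmono (fun b hb => hb.2)
    support_indicator_subset fun n => ?_
  rw [indicator_indicator, inter_eq_left.2 (subset_iUnion (fun n => (seq n).1) n)]
  have hsupport : next (seq n) ⊆ ⋃ n, (seq n).1 :=
    hseq_succ n ▸ subset_iUnion (fun n => (seq n).1) (n + 1)
  refine closure_mono (image_mono ?_) (hnext_closure (seq n) (mem_image_of_mem _ ha))
  exact fun b hb => ⟨hb.1, hb.2.trans hsupport⟩

end PointwiseTopology

section MeasurableAtom

variable {β : Type*} [MeasurableSpace β]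

theorem MeasurableSet.measurableAtom_of_mem_of_countable {K : Set β} (hK : MeasurableSet K)
    (hKc : K.Countable) {x : β} (hx : x ∈ K) : MeasurableSet (measurableAtom x) := by
  have hsep : ∀ y ∈ K \ measurableAtom x, ∃ s, x ∈ s ∧ MeasurableSet s ∧ y ∉ s := fun y hy => by
    simpa [measurableAtom] using hy.2
  choose! s hxs hs hys using hsep
  have hatom : measurableAtom x = K ∩ ⋂ y ∈ K \ measurableAtom x, s y := by
    refine subset_antisymm (subset_inter (measurableAtom_subset hK hx)
      (subset_iInter₂ fun y hy => measurableAtom_subset (hs y hy) (hxs y hy))) ?_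
    rintro z ⟨hzK, hz⟩
    by_contra hzx
    exact hys z ⟨hzK, hzx⟩ (mem_iInter₂.1 hz z ⟨hzK, hzx⟩)
  rw [hatom]
  exact hK.inter (.biInter (hKc.mono sdiff_subset) hs)

theorem exists_partition_countable_measurableSet
    (h : ∀ x : β, ∃ K : Set β, K.Countable ∧ x ∈ K ∧ MeasurableSet K) :
    ∃ 𝒥 : Set (Set β), (∀ J ∈ 𝒥, J.Countable ∧ MeasurableSet J) ∧
      𝒥.PairwiseDisjoint id ∧ ⋃₀ 𝒥 = univ := by
  refine ⟨range measurableAtom, ?_, ?_, ?_⟩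
  · rintro _ ⟨x, rfl⟩
    obtain ⟨K, hKc, hxK, hK⟩ := h x
    exact ⟨hKc.mono (measurableAtom_subset hK hxK), hK.measurableAtom_of_mem_of_countable hKc hxK⟩
  · rintro _ ⟨x, rfl⟩ _ ⟨y, rfl⟩ hne
    exact disjoint_measurableAtom_of_notMem fun h => hne (measurableAtom_eq_of_mem h)
  · exact eq_univ_of_forall fun x => mem_sUnion_of_mem (mem_measurableAtom_self x) ⟨x, rfl⟩

end MeasurableAtom

section RestrictInvariant

variable {Γ : Type*} {p : ℝ≥0∞}

@[simp]
theorem coe_lpRestrict (x : lp (fun _ : Γ => ℝ) p) (J : Set Γ) :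
    ⇑(lpRestrict x J) = J.indicator ⇑x :=
  rfl

theorem Memℓp.countable_support {f : Γ → ℝ} (hf : Memℓp f p) (hp : 0 < p.toReal) :
    f.support.Countable := by
  convert (hf.summable hp).countable_support using 1
  ext i
  simp [hp.ne']

def IsRestrictInvariant (X : Submodule ℝ (lp (fun _ : Γ => ℝ) p)) (J : Set Γ) : Prop :=
  ∀ x ∈ X, lpRestrict x J ∈ X

def unitBallFns (X : Submodule ℝ (lp (fun _ : Γ => ℝ) p)) : Set (Γ → ℝ) :=
  {f | ∃ x : lp (fun _ : Γ => ℝ) p, x ∈ X ∧ ‖x‖ ≤ 1 ∧ ⇑x = f}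

variable {X : Submodule ℝ (lp (fun _ : Γ => ℝ) p)} {J K : Set Γ}

theorem isRestrictInvariant_empty : IsRestrictInvariant X ∅ := fun x _ => by
  convert X.zero_mem
  ext
  simp

theorem IsRestrictInvariant.compl (hJ : IsRestrictInvariant X J) : IsRestrictInvariant X Jᶜ :=
  fun x hx => by
    convert X.sub_mem hx (hJ x hx)
    exact lp.ext (by rw [coe_lpRestrict, lp.coeFn_sub, coe_lpRestrict, indicator_compl])

theorem IsRestrictInvariant.inter (hJ : IsRestrictInvariant X J) (hK : IsRestrictInvariant X K) :
    IsRestrictInvariant X (J ∩ K) := fun x hx => by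
  convert hJ _ (hK x hx) using 1
  ext
  simp [indicator_indicator]

theorem IsRestrictInvariant.union (hJ : IsRestrictInvariant X J) (hK : IsRestrictInvariant X K) :
    IsRestrictInvariant X (J ∪ K) := by
  simpa [compl_inter] using (hJ.compl.inter hK.compl).compl

theorem IsRestrictInvariant.accumulate {s : ℕ → Set Γ} (hs : ∀ n, IsRestrictInvariant X (s n))
    (n : ℕ) : IsRestrictInvariant X (Set.accumulate s n) := by
  induction n with
  | zero => simpa [accumulate_zero_nat] using hs 0
  | succ n ih => simpa [accumulate_succ] using ih.union (hs (n + 1))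

theorem lpRestrict_mem_of_indicator_mem_unitBallFns {x : lp (fun _ : Γ => ℝ) p}
    (hx : J.indicator ⇑x ∈ unitBallFns X) : lpRestrict x J ∈ X := by
  obtain ⟨y, hy, -, hyx⟩ := hx
  rwa [show lpRestrict x J = y from lp.ext hyx.symm]

variable [Fact (1 ≤ p)]

theorem norm_lpRestrict_le (x : lp (fun _ : Γ => ℝ) p) (J : Set Γ) : ‖lpRestrict x J‖ ≤ ‖x‖ :=
  lp.norm_mono (zero_lt_one.trans_le Fact.out).ne' fun i => by
    by_cases hi : i ∈ J <;> simp [hi]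

theorem IsRestrictInvariant.of_norm_le_one (h : ∀ x ∈ X, ‖x‖ ≤ 1 → lpRestrict x J ∈ X) :
    IsRestrictInvariant X J := fun x hx => by
  have hc : 0 < ‖x‖ + 1 := by positivity
  have hsmall : ‖(‖x‖ + 1)⁻¹ • x‖ ≤ 1 := by
    rw [norm_smul, Real.norm_of_nonneg (inv_nonneg.2 hc.le), inv_mul_le_iff₀ hc]
    linarith
  convert X.smul_mem (‖x‖ + 1) (h _ (X.smul_mem _ hx) hsmall)
  ext i
  by_cases hi : i ∈ J <;> simp [hi, hc.ne']

theorem IsRestrictInvariant.iUnion_of_monotone (hweak : IsClosed (unitBallFns X))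
    {s : ℕ → Set Γ} (hmono : Monotone s) (hs : ∀ n, IsRestrictInvariant X (s n)) :
    IsRestrictInvariant X (⋃ n, s n) :=
  of_norm_le_one fun x hx hx1 => lpRestrict_mem_of_indicator_mem_unitBallFns <|
    hweak.mem_of_tendsto
      (tendsto_pi_nhds.2 fun i => (hmono.tendsto_indicator s ⇑x i).mono_right (pure_le_nhds _))
      (Eventually.of_forall fun n =>
        ⟨lpRestrict x (s n), hs n x hx, (norm_lpRestrict_le x _).trans hx1, rfl⟩)

abbrev restrictInvariantMeasurableSpace (X : Submodule ℝ (lp (fun _ : Γ => ℝ) p))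
    (hweak : IsClosed (unitBallFns X)) : MeasurableSpace Γ where
  MeasurableSet' := IsRestrictInvariant X
  measurableSet_empty := isRestrictInvariant_empty
  measurableSet_compl _ := IsRestrictInvariant.compl
  measurableSet_iUnion s hs := iUnion_accumulate (s := s) ▸
    IsRestrictInvariant.iUnion_of_monotone hweak monotone_accumulate
      (IsRestrictInvariant.accumulate hs)

theorem exists_countable_isRestrictInvariant_mem (hp : p ≠ ∞) (hweak : IsClosed (unitBallFns X))
    (γ : Γ) : ∃ K : Set Γ, K.Countable ∧ γ ∈ K ∧ IsRestrictInvariant X K := by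
  have hp' : 0 < p.toReal := ENNReal.toReal_pos (zero_lt_one.trans_le Fact.out).ne' hp
  obtain ⟨K, hKc, hγK, hK⟩ := exists_countable_mem_forall_indicator_mem_closure
    (A := unitBallFns X) (by rintro _ ⟨x, -, -, rfl⟩; exact (lp.memℓp x).countable_support hp') γ
  refine ⟨K, hKc, hγK, .of_norm_le_one fun x hx hx1 => ?_⟩
  exact lpRestrict_mem_of_indicator_mem_unitBallFns
    (closure_minimal (sep_subset _ _) hweak (hK _ ⟨x, hx, hx1, rfl⟩))

end RestrictInvariant

theorem weakStarClosed_subspace_l1_decomposition_general {Γ : Type*}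
    (X : Submodule ℝ (lp (fun _ : Γ => ℝ) 1))
    (hweak : IsClosed {f : Γ → ℝ |
      ∃ x : lp (fun _ : Γ => ℝ) 1, x ∈ X ∧ ‖x‖ ≤ 1 ∧ ⇑x = f}) :
    ∃ 𝒥 : Set (Set Γ),
      (∀ J ∈ 𝒥, J.Countable) ∧
      𝒥.PairwiseDisjoint id ∧
      ⋃₀ 𝒥 = Set.univ ∧
      ∀ x ∈ X, ∀ J ∈ 𝒥, lpRestrict x J ∈ X := by
  let _ : MeasurableSpace Γ := restrictInvariantMeasurableSpace X hweak
  obtain ⟨𝒥, h𝒥, hdisjoint, hcover⟩ := exists_partition_countable_measurableSet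
    (exists_countable_isRestrictInvariant_mem ENNReal.one_ne_top hweak)
  exact ⟨𝒥, fun J hJ => (h𝒥 J hJ).1, hdisjoint, hcover, fun x hx J hJ => (h𝒥 J hJ).2 x hx⟩

/-- Every weak*-closed subspace of `ℓ₁(Γ)` is the internal `ℓ₁`-sum, over a partition `𝒥` of
`Γ` into countable subsets, of the subspaces `{x·1_J : x ∈ X}`. Here weak*-closed means that
the set of underlying functions of elements of the unit ball of `X` is closed in the topology
of pointwise convergence on `Γ → ℝ`. -/
theorem weakStarClosed_subspace_l1_decomposition {Γ : Type*}
    (X : Submodule ℝ (lp (fun _ : Γ => ℝ) 1))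
    (hX : IsClosed (X : Set (lp (fun _ : Γ => ℝ) 1)))
    (hweak : IsClosed {f : Γ → ℝ |
      ∃ x : lp (fun _ : Γ => ℝ) 1, x ∈ X ∧ ‖x‖ ≤ 1 ∧ ⇑x = f}) :
    ∃ 𝒥 : Set (Set Γ),
      (∀ J ∈ 𝒥, J.Countable) ∧
      𝒥.PairwiseDisjoint id ∧
      ⋃₀ 𝒥 = Set.univ ∧
      ∀ x ∈ X, ∀ J ∈ 𝒥, lpRestrict x J ∈ X :=
  weakStarClosed_subspace_l1_decomposition_general X hweak

end
end

section
/- Let Γ be a set, let ε > 0 and ρ ≥ 0 be real numbers, and let (z_i)_{i∈I} be a family in ℓ₁(Γ) satisfying ‖∑_i λ_i z_i‖ ≥ ε ∑_i |λ_i| for every finitely supported λ : I → ℝ. Let (y_i)_{i∈I} be a family in ℓ₁(Γ) with ‖z_i − y_i‖ ≤ ρ for all i, and let Z be the closed linear span of {z_i} and Y the closed linear span of {y_i}. Then there exists a continuous linear map τ : Z → ℓ₁(Γ) with τ z_i = y_i for all i, ‖τ‖ ≤ 1 + ρ/ε, and ‖z − τ z‖ ≤ (ρ/ε)‖z‖ for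 all z ∈ Z. Moreover, if ρ < ε then τ is an isomorphism of Z onto Y (τ induces a continuous linear equivalence Z ≃ Y). -/
/-!
Writing `x = ∑ λᵢ zᵢ` in the span of the `zᵢ`, the lower `ℓ₁` estimate gives
`∑ |λᵢ| ≤ ‖x‖ / ε`, so `x ↦ ∑ λᵢ yᵢ` is well defined and moves `x` by at most
`ρ ∑ |λᵢ| ≤ (ρ / ε) ‖x‖`. This bound survives the extension by continuity to the closed span and
gives `‖τ‖ ≤ 1 + ρ / ε`; when `ρ < ε` it also gives `‖τ w‖ ≥ (1 - ρ / ε) ‖w‖`, so `τ` is an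
isomorphism onto its range, which is closed and hence equal to the closed span of the `yᵢ`.
-/

open Finsupp

section LowerEstimate

variable {𝕜 E I : Type*} [NontriviallyNormedField 𝕜] [NormedAddCommGroup E] [NormedSpace 𝕜 E]

theorem Finsupp.norm_linearCombination_le {v : I → E} {C : ℝ} (hv : ∀ i, ‖v i‖ ≤ C)
    (l : I →₀ 𝕜) : ‖linearCombination 𝕜 v l‖ ≤ C * l.sum fun _ a => ‖a‖ := by
  rw [linearCombination_apply, Finsupp.sum, Finsupp.sum, Finset.mul_sum]
  refine (norm_sum_le _ _).trans (Finset.sum_le_sum fun i _ => ?_)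
  rw [norm_smul, mul_comm]
  exact mul_le_mul_of_nonneg_right (hv i) (norm_nonneg _)

theorem linearIndependent_of_lower_l1_estimate {z : I → E} {ε : ℝ} (hε : 0 < ε)
    (hz : ∀ l : I →₀ 𝕜, ε * (l.sum fun _ a => ‖a‖) ≤ ‖linearCombination 𝕜 z l‖) :
    LinearIndependent 𝕜 z := by
  rw [linearIndependent_iff]
  intro l hl
  have hsum : (l.sum fun _ a => ‖a‖) = 0 := by
    have hzl := hz l
    rw [hl, norm_zero] at hzl
    exact le_antisymm (nonpos_of_mul_nonpos_right hzl hε) (sum_nonneg fun _ _ => norm_nonneg _)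
  ext i
  by_contra hi
  have hli0 : ‖l i‖ = 0 := (Finset.sum_eq_zero_iff_of_nonneg fun _ _ => norm_nonneg _).1 hsum i
    (mem_support_iff.2 hi)
  exact hi (norm_eq_zero.1 hli0)

theorem norm_sub_linearCombination_repr_le {z y : I → E} {ε ρ : ℝ} (hε : 0 < ε) (hρ : 0 ≤ ρ)
    (hz : ∀ l : I →₀ 𝕜, ε * (l.sum fun _ a => ‖a‖) ≤ ‖linearCombination 𝕜 z l‖)
    (hy : ∀ i, ‖z i - y i‖ ≤ ρ) (hli : LinearIndependent 𝕜 z)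
    (x : Submodule.span 𝕜 (Set.range z)) :
    ‖(x : E) - linearCombination 𝕜 y (hli.repr x)‖ ≤ ρ / ε * ‖x‖ := by
  set l := hli.repr x
  have hx : linearCombination 𝕜 z l = x := hli.linearCombination_repr x
  calc ‖(x : E) - linearCombination 𝕜 y l‖ = ‖linearCombination 𝕜 (z - y) l‖ := by
        rw [← hx]; simp [linearCombination_apply, Finsupp.sum, smul_sub]
    _ ≤ ρ * l.sum fun _ a => ‖a‖ := norm_linearCombination_le hy l
    _ ≤ ρ * (‖x‖ / ε) := by
        gcongr
        rw [le_div_iff₀ hε, mul_comm]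
        exact (hz l).trans_eq (by rw [hx]; rfl)
    _ = ρ / ε * ‖x‖ := by ring

end LowerEstimate

namespace Submodule

variable {𝕜 E F : Type*} [NontriviallyNormedField 𝕜] [NormedAddCommGroup E] [NormedSpace 𝕜 E]
  [NormedAddCommGroup F] [NormedSpace 𝕜 F] [CompleteSpace F] {S : Submodule 𝕜 E}

variable (S) in
theorem denseRange_inclusion_topologicalClosure :
    DenseRange (inclusion S.le_topologicalClosure) :=
  (denseRange_inclusion_iff (s := (S : Set E)) S.le_topologicalClosure).2
    S.topologicalClosure_coe.le

variable (S) in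
noncomputable def extendToClosure (f : S →ₗ[𝕜] F) : S.topologicalClosure →L[𝕜] F :=
  f.extendOfNorm (inclusion S.le_topologicalClosure)

variable {f : S →ₗ[𝕜] F} {C : ℝ}

theorem extendToClosure_inclusion (hf : ∀ x, ‖f x‖ ≤ C * ‖x‖) (x : S) :
    S.extendToClosure f (inclusion S.le_topologicalClosure x) = f x :=
  LinearMap.extendOfNorm_eq S.denseRange_inclusion_topologicalClosure ⟨C, hf⟩ x

theorem opNorm_extendToClosure_le (hC : 0 ≤ C) (hf : ∀ x, ‖f x‖ ≤ C * ‖x‖) :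
    ‖S.extendToClosure f‖ ≤ C :=
  LinearMap.opNorm_extendOfNorm_le S.denseRange_inclusion_topologicalClosure hC hf

theorem range_extendToClosure_le (hf : ∀ x, ‖f x‖ ≤ C * ‖x‖) :
    (S.extendToClosure f).range ≤ (LinearMap.range f).topologicalClosure := by
  rintro _ ⟨w, rfl⟩
  refine S.denseRange_inclusion_topologicalClosure.induction_on w
    ((isClosed_topologicalClosure _).preimage (S.extendToClosure f).continuous) fun x => ?_
  rw [ContinuousLinearMap.coe_coe, extendToClosure_inclusion hf]
  exact le_topologicalClosure _ (LinearMap.mem_range_self f x)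

section PerturbationOfIdentity

variable {f : S →ₗ[𝕜] E} {c : ℝ}

theorem norm_apply_le_of_norm_sub_apply_le (hf : ∀ x : S, ‖(x : E) - f x‖ ≤ c * ‖x‖) (x : S) :
    ‖f x‖ ≤ (1 + c) * ‖x‖ :=
  calc ‖f x‖ ≤ ‖(x : E)‖ + ‖(x : E) - f x‖ := norm_le_insert _ _
    _ ≤ (1 + c) * ‖x‖ := by rw [add_mul, one_mul]; exact add_le_add_right (hf x) _

theorem antilipschitzWith_of_norm_sub_le {T : Submodule 𝕜 E} (g : T →L[𝕜] E) (hc : c < 1)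
    (hg : ∀ w : T, ‖(w : E) - g w‖ ≤ c * ‖w‖) : AntilipschitzWith (Real.toNNReal (1 - c))⁻¹ g := by
  refine AddMonoidHomClass.antilipschitz_of_bound g fun w => ?_
  have hc' : 0 < 1 - c := sub_pos.2 hc
  have hw : ‖w‖ - ‖g w‖ ≤ ‖(w : E) - g w‖ := norm_sub_norm_le (w : E) _
  rw [NNReal.coe_inv, Real.coe_toNNReal _ hc'.le, inv_mul_eq_div, le_div_iff₀ hc']
  linarith [hg w]

variable [CompleteSpace E]

theorem norm_sub_extendToClosure_le (hf : ∀ x : S, ‖(x : E) - f x‖ ≤ c * ‖x‖)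
    (w : S.topologicalClosure) : ‖(w : E) - S.extendToClosure f w‖ ≤ c * ‖w‖ := by
  refine S.denseRange_inclusion_topologicalClosure.induction_on w
    (isClosed_le (by fun_prop) (by fun_prop)) fun x => ?_
  rw [extendToClosure_inclusion (norm_apply_le_of_norm_sub_apply_le hf)]
  exact hf x

theorem exists_continuousLinearEquiv_extendToClosure (hc : c < 1)
    (hf : ∀ x : S, ‖(x : E) - f x‖ ≤ c * ‖x‖) :
    ∃ e : S.topologicalClosure ≃L[𝕜] (LinearMap.range f).topologicalClosure,
      ∀ w, (e w : E) = S.extendToClosure f w := by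
  set τ := S.extendToClosure f
  have hτ := antilipschitzWith_of_norm_sub_le τ hc (norm_sub_extendToClosure_le hf)
  have hclosed : IsClosed (Set.range τ) := hτ.isClosed_range τ.uniformContinuous
  have hrange : τ.range = (LinearMap.range f).topologicalClosure := by
    refine le_antisymm (range_extendToClosure_le (norm_apply_le_of_norm_sub_apply_le hf))
      (topologicalClosure_minimal _ ?_ hclosed)
    rintro _ ⟨x, rfl⟩
    exact ⟨_, extendToClosure_inclusion (norm_apply_le_of_norm_sub_apply_le hf) x⟩
  exact ⟨(τ.equivRange hτ.injective hclosed).trans (.ofEq _ _ hrange), fun _ => rfl⟩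

end PerturbationOfIdentity

end Submodule

/-- The small-perturbation principle in `ℓ₁(Γ)`: if `(z_i)` is `ε`-lower-`ℓ₁` and `(y_i)` is a
`ρ`-perturbation of `(z_i)`, then `z_i ↦ y_i` extends to an operator `τ` on the closed span `Z`
of the `z_i` with `‖τ‖ ≤ 1 + ρ/ε` and `‖z − τ z‖ ≤ (ρ/ε)‖z‖`; if moreover `ρ < ε` then `τ` is
an isomorphism of `Z` onto the closed span `Y` of the `y_i`. -/
theorem perturbation_l1 {Γ I : Type*} (ε ρ : ℝ) (hε : 0 < ε) (hρ : 0 ≤ ρ)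
    (z y : I → lp (fun _ : Γ => ℝ) 1)
    (hz : ∀ l : I →₀ ℝ, ε * ∑ i ∈ l.support, |l i| ≤ ‖∑ i ∈ l.support, l i • z i‖)
    (hy : ∀ i, ‖z i - y i‖ ≤ ρ) :
    ∃ τ : (Submodule.span ℝ (Set.range z)).topologicalClosure →L[ℝ] lp (fun _ : Γ => ℝ) 1,
      (∀ i, τ ⟨z i, (Submodule.span ℝ (Set.range z)).le_topologicalClosure
          (Submodule.subset_span (Set.mem_range_self i))⟩ = y i) ∧
      ‖τ‖ ≤ 1 + ρ / ε ∧
      (∀ w : (Submodule.span ℝ (Set.range z)).topologicalClosure,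
        ‖(w : lp (fun _ : Γ => ℝ) 1) - τ w‖ ≤ (ρ / ε) * ‖w‖) ∧
      (ρ < ε →
        ∃ e : (Submodule.span ℝ (Set.range z)).topologicalClosure ≃L[ℝ]
            (Submodule.span ℝ (Set.range y)).topologicalClosure,
          ∀ w : (Submodule.span ℝ (Set.range z)).topologicalClosure,
            (e w : lp (fun _ : Γ => ℝ) 1) = τ w) := by
  have hz' : ∀ l : I →₀ ℝ, ε * (l.sum fun _ a => ‖a‖) ≤ ‖linearCombination ℝ z l‖ := by
    simpa [linearCombination_apply, Finsupp.sum] using hz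
  have hli := linearIndependent_of_lower_l1_estimate hε hz'
  set f := linearCombination ℝ y ∘ₗ hli.repr
  have hf : ∀ x : Submodule.span ℝ (Set.range z),
      ‖(x : lp (fun _ : Γ => ℝ) 1) - f x‖ ≤ ρ / ε * ‖x‖ :=
    norm_sub_linearCombination_repr_le hε hρ hz' hy hli
  have hbound := Submodule.norm_apply_le_of_norm_sub_apply_le hf
  have hfz (i : I) : f ⟨z i, Submodule.subset_span (Set.mem_range_self i)⟩ = y i := by
    simp [f, hli.repr_eq_single i ⟨z i, _⟩ rfl]
  have hrange : LinearMap.range f = Submodule.span ℝ (Set.range y) := by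
    rw [LinearMap.range_comp_of_range_eq_top _ hli.repr_range, Finsupp.range_linearCombination]
  refine ⟨Submodule.extendToClosure _ f, fun i => ?_,
    Submodule.opNorm_extendToClosure_le (by positivity) hbound,
    Submodule.norm_sub_extendToClosure_le hf, fun hρε => ?_⟩
  · exact (Submodule.extendToClosure_inclusion hbound _).trans (hfz i)
  · rw [← hrange]
    exact Submodule.exists_continuousLinearEquiv_extendToClosure ((div_lt_one hε).2 hρε) hf
end

section
/- Let Γ be a set, let 0 ≤ ρ < ε be real numbers, let (z_i)_{i∈I} be a family in ℓ₁(Γ) satisfying ‖∑_i λ_i z_i‖ ≥ ε ∑_i |λ_i| for every finitely supported λ : I → ℝ, and let (y_i)_{i∈I} satisfy ‖z_i − y_i‖ ≤ ρ for all i. Let Z be the closed linear span of {z_i} and Y the closed linear span of {y_i}, and suppose there is a contractive continuous linear projection P : ℓ₁(Γ) → ℓ₁(Γ) (P ∘ P = P, ‖P‖ ≤ 1) with range Z. Then there exists a continuous linear automorphism T of ℓ₁(Γ) (a continuous linear equivalence ℓ₁(Γ) ≃ ℓ₁(Γ)) such that T z_i = y_i for all i, ‖T − id‖ ≤ ρ/ε,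 and Y is complemented in ℓ₁(Γ): Y is the range of the continuous linear projection T ∘ P ∘ T⁻¹. -/
/-!
The lower ℓ₁-estimate makes `(zᵢ)` linearly independent and the map `∑ λᵢ zᵢ ↦ ∑ λᵢ (yᵢ - zᵢ)`
on their span bounded by `ρ / ε`. It extends by continuity to the closed span `Z`, and then to the
whole space by precomposing with the contractive projection `P` onto `Z`. The resulting `K` has
`‖K‖ ≤ ρ / ε < 1`, so `T = 1 + K` is invertible (Neumann series), sends `zᵢ` to `yᵢ`, and
`T P T⁻¹` is a projection onto `T(Z) = Y`.
-/

open Submodule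

section LowerEllOneBound

variable {I E F : Type*} [NormedAddCommGroup E] [NormedSpace ℝ E]
  [NormedAddCommGroup F] [NormedSpace ℝ F] {z : I → E} {ε : ℝ}

theorem linearIndependent_of_mul_sum_abs_le_norm_sum (hε : 0 < ε)
    (hz : ∀ l : I →₀ ℝ, ε * ∑ i ∈ l.support, |l i| ≤ ‖∑ i ∈ l.support, l i • z i‖) :
    LinearIndependent ℝ z := by
  refine linearIndependent_iff.2 fun l hl => ?_
  rw [Finsupp.linearCombination_apply, Finsupp.sum] at hl
  have hsum : ∑ i ∈ l.support, |l i| ≤ 0 :=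
    nonpos_of_mul_nonpos_right (by simpa [hl] using hz l) hε
  refine Finsupp.support_eq_empty.1 (Finset.eq_empty_of_forall_notMem fun i hi => ?_)
  have habs := (Finset.sum_eq_zero_iff_of_nonneg fun j _ => abs_nonneg (l j)).1
    (hsum.antisymm (Finset.sum_nonneg fun j _ => abs_nonneg _)) i hi
  exact Finsupp.mem_support_iff.1 hi (abs_eq_zero.1 habs)

theorem exists_clm_span_apply_eq_of_mul_sum_abs_le_norm_sum {w : I → F} {C : ℝ}
    (hε : 0 < ε) (hC : 0 ≤ C)
    (hz : ∀ l : I →₀ ℝ, ε * ∑ i ∈ l.support, |l i| ≤ ‖∑ i ∈ l.support, l i • z i‖)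
    (hw : ∀ i, ‖w i‖ ≤ C) :
    ∃ D : span ℝ (Set.range z) →L[ℝ] F,
      ‖D‖ ≤ C / ε ∧ ∀ i, D ⟨z i, subset_span (Set.mem_range_self i)⟩ = w i := by
  have hli := linearIndependent_of_mul_sum_abs_le_norm_sum hε hz
  let D : span ℝ (Set.range z) →ₗ[ℝ] F := Finsupp.linearCombination ℝ w ∘ₗ hli.repr
  have hD : ∀ v, ‖D v‖ ≤ C / ε * ‖v‖ := by
    intro v
    set l := hli.repr v
    have hv : ‖v‖ = ‖∑ i ∈ l.support, l i • z i‖ := by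
      rw [← norm_coe, ← hli.linearCombination_repr v, Finsupp.linearCombination_apply, Finsupp.sum]
    calc ‖D v‖ = ‖∑ i ∈ l.support, l i • w i‖ := rfl
      _ ≤ ∑ i ∈ l.support, |l i| * C := by
        refine (norm_sum_le _ _).trans (Finset.sum_le_sum fun i _ => ?_)
        rw [norm_smul, Real.norm_eq_abs]
        exact mul_le_mul_of_nonneg_left (hw i) (abs_nonneg _)
      _ = C / ε * (ε * ∑ i ∈ l.support, |l i|) := by
        rw [← Finset.sum_mul]; field_simp
      _ ≤ C / ε * ‖v‖ := hv ▸ mul_le_mul_of_nonneg_left (hz l) (div_nonneg hC hε.le)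
  refine ⟨D.mkContinuous (C / ε) hD, LinearMap.mkContinuous_norm_le _ (div_nonneg hC hε.le) _,
    fun i => ?_⟩
  simp [D, hli.repr_eq_single i ⟨z i, _⟩ rfl]

end LowerEllOneBound

section Extension

variable {𝕜 E F : Type*} [NontriviallyNormedField 𝕜] [NormedAddCommGroup E] [NormedSpace 𝕜 E]
  [NormedAddCommGroup F] [NormedSpace 𝕜 F] [CompleteSpace F]

theorem Submodule.exists_extend_topologicalClosure {S : Submodule 𝕜 E} (f : S →L[𝕜] F) :
    ∃ g : S.topologicalClosure →L[𝕜] F,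
      ‖g‖ ≤ ‖f‖ ∧ ∀ x : S, g (inclusion S.le_topologicalClosure x) = f x := by
  let j : S →L[𝕜] S.topologicalClosure :=
    S.subtypeL.codRestrict _ fun x => S.le_topologicalClosure x.2
  have hj : ∀ x, ‖x‖ ≤ (1 : NNReal) * ‖j x‖ := fun x => by simp [j]
  have hdense : DenseRange j :=
    (denseRange_inclusion_iff (S.le_topologicalClosure : (S : Set E) ⊆ _)).2 subset_rfl
  refine ⟨f.extend j, by simpa using f.opNorm_extend_le hdense hj, fun x => ?_⟩
  exact f.extend_eq hdense
    (ContinuousLinearMap.isUniformEmbedding_of_bound j hj).isUniformInducing x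

theorem exists_extend_of_range_contractive_projection {S : Submodule 𝕜 E} {P : E →L[𝕜] E}
    (hP : P.comp P = P) (hPnorm : ‖P‖ ≤ 1)
    (hPrange : LinearMap.range (P : E →ₗ[𝕜] E) = S.topologicalClosure) (f : S →L[𝕜] F) :
    ∃ g : E →L[𝕜] F, ‖g‖ ≤ ‖f‖ ∧ ∀ x : S, g x = f x := by
  obtain ⟨g, hg, hgf⟩ := S.exists_extend_topologicalClosure f
  have hPmem : ∀ x, P x ∈ S.topologicalClosure := fun x => hPrange ▸ LinearMap.mem_range_self _ x
  have hPfix : ∀ x ∈ S.topologicalClosure, P x = x := by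
    rintro _ hx
    obtain ⟨x, rfl⟩ := hPrange ▸ hx
    exact congr($hP x)
  let Q : E →L[𝕜] S.topologicalClosure := P.codRestrict _ hPmem
  refine ⟨g.comp Q, ?_, fun x => ?_⟩
  · calc ‖g.comp Q‖ ≤ ‖g‖ * ‖Q‖ := g.opNorm_comp_le Q
      _ ≤ ‖f‖ * 1 := by
        gcongr
        exact Q.opNorm_le_bound zero_le_one fun x =>
          (one_mul ‖x‖).symm ▸ P.le_of_opNorm_le hPnorm x
      _ = ‖f‖ := mul_one _
  · have hQx : Q x = inclusion S.le_topologicalClosure x :=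
      Subtype.ext (hPfix x (S.le_topologicalClosure x.2))
    rw [ContinuousLinearMap.comp_apply, hQx, hgf]

theorem exists_continuousLinearEquiv_coe_eq_one_add [CompleteSpace E] (K : E →L[𝕜] E)
    (hK : ‖K‖ < 1) : ∃ T : E ≃L[𝕜] E, (T : E →L[𝕜] E) = 1 + K :=
  ⟨.ofUnit (Units.oneSub (-K) (by rwa [norm_neg])), by
    ext x; simp [ContinuousLinearEquiv.ofUnit, Units.val_oneSub]⟩

end Extension

namespace ContinuousLinearEquiv

variable {R M : Type*} [Semiring R] [AddCommMonoid M] [Module R M] [TopologicalSpace M]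

theorem conj_comp_conj_of_comp_self (T : M ≃L[R] M) {P : M →L[R] M} (hP : P.comp P = P) :
    (T.toContinuousLinearMap.comp (P.comp T.symm.toContinuousLinearMap)).comp
        (T.toContinuousLinearMap.comp (P.comp T.symm.toContinuousLinearMap)) =
      T.toContinuousLinearMap.comp (P.comp T.symm.toContinuousLinearMap) := by
  ext x
  simpa using congr(T ($hP (T.symm x)))

theorem range_conj (T : M ≃L[R] M) (P : M →L[R] M) :
    LinearMap.range (T.toContinuousLinearMap.comp (P.comp T.symm.toContinuousLinearMap) :
      M →ₗ[R] M) = (LinearMap.range (P : M →ₗ[R] M)).map (T : M →ₗ[R] M) := by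
  change LinearMap.range ((T : M →ₗ[R] M) ∘ₗ (P : M →ₗ[R] M) ∘ₗ (T.symm : M →ₗ[R] M)) = _
  rw [LinearMap.range_comp, LinearMap.range_comp_of_range_eq_top _ T.symm.toLinearEquiv.range]

theorem map_topologicalClosure [TopologicalSpace R] [ContinuousSMul R M] [ContinuousAdd M]
    (T : M ≃L[R] M) (S : Submodule R M) :
    S.topologicalClosure.map (T : M →ₗ[R] M) = (S.map (T : M →ₗ[R] M)).topologicalClosure :=
  SetLike.coe_injective <| by
    simpa [Submodule.topologicalClosure_coe] using T.toHomeomorph.image_closure (S : Set M)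

end ContinuousLinearEquiv

/-- If in the small-perturbation setting the closed span `Z` of `(z_i)` is the range of a
contractive projection `P` on `ℓ₁(Γ)` and `0 ≤ ρ < ε`, then `z_i ↦ y_i` extends to an
automorphism `T` of `ℓ₁(Γ)` with `‖T − id‖ ≤ ρ/ε`, and the closed span `Y` of `(y_i)` is
complemented in `ℓ₁(Γ)`, being the range of the projection `T ∘ P ∘ T⁻¹`. -/
theorem perturbation_l1_complemented {Γ I : Type*} (ε ρ : ℝ) (hρ : 0 ≤ ρ) (hρε : ρ < ε)
    (z y : I → lp (fun _ : Γ => ℝ) 1)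
    (hz : ∀ l : I →₀ ℝ, ε * ∑ i ∈ l.support, |l i| ≤ ‖∑ i ∈ l.support, l i • z i‖)
    (hy : ∀ i, ‖z i - y i‖ ≤ ρ)
    (P : lp (fun _ : Γ => ℝ) 1 →L[ℝ] lp (fun _ : Γ => ℝ) 1)
    (hP : P.comp P = P) (hPnorm : ‖P‖ ≤ 1)
    (hPrange : LinearMap.range (P : lp (fun _ : Γ => ℝ) 1 →ₗ[ℝ] lp (fun _ : Γ => ℝ) 1) = (Submodule.span ℝ (Set.range z)).topologicalClosure) :
    ∃ T : lp (fun _ : Γ => ℝ) 1 ≃L[ℝ] lp (fun _ : Γ => ℝ) 1,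
      (∀ i, T (z i) = y i) ∧
      ‖T.toContinuousLinearMap - ContinuousLinearMap.id ℝ (lp (fun _ : Γ => ℝ) 1)‖ ≤ ρ / ε ∧
      (T.toContinuousLinearMap.comp (P.comp T.symm.toContinuousLinearMap)).comp
          (T.toContinuousLinearMap.comp (P.comp T.symm.toContinuousLinearMap)) =
        T.toContinuousLinearMap.comp (P.comp T.symm.toContinuousLinearMap) ∧
      LinearMap.range ((T.toContinuousLinearMap.comp (P.comp T.symm.toContinuousLinearMap) :
          lp (fun _ : Γ => ℝ) 1 →ₗ[ℝ] lp (fun _ : Γ => ℝ) 1)) =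
        (Submodule.span ℝ (Set.range y)).topologicalClosure := by
  have hε : 0 < ε := hρ.trans_lt hρε
  obtain ⟨D, hD, hDz⟩ := exists_clm_span_apply_eq_of_mul_sum_abs_le_norm_sum
    (w := fun i => y i - z i) hε hρ hz fun i => norm_sub_rev (y i) (z i) ▸ hy i
  obtain ⟨K, hKD, hKz⟩ := exists_extend_of_range_contractive_projection hP hPnorm hPrange D
  have hK : ‖K‖ ≤ ρ / ε := hKD.trans hD
  obtain ⟨T, hT⟩ := exists_continuousLinearEquiv_coe_eq_one_add K
    (hK.trans_lt ((div_lt_one hε).2 hρε))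
  have hTz : ∀ i, T (z i) = y i := fun i => by
    have hKzi : K (z i) = y i - z i := (hKz _).trans (hDz i)
    rw [← T.coe_coe, hT, add_apply, hKzi]
    exact add_sub_cancel (z i) (y i)
  refine ⟨T, hTz, ?_, T.conj_comp_conj_of_comp_self hP, ?_⟩
  · rwa [hT, ← ContinuousLinearMap.one_def, add_sub_cancel_left]
  · rw [T.range_conj, hPrange, T.map_topologicalClosure, map_span, ← Set.range_comp]
    congr 3
    exact funext hTz
end

section
/- Let Γ be a set and let X be a closed linear subspace of ℓ₁(Γ) whose density character κ = dens(X) has uncountable cofinality (for instance, κ is an uncountable regular cardinal) and satisfies κ < |Γ|. Then there exists ε > 0 such that for every subset I ⊆ Γ with |I| < κ there is an x ∈ X with ‖x‖ = 1 and ‖x·1_{Γ∖I}‖ > ε. -/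
open scoped ENNReal

noncomputable section

/-- The density character of a topological space: the least cardinality of a dense subset. -/
def densChar (X : Type u) [TopologicalSpace X] : Cardinal.{u} :=
  sInf { c : Cardinal | ∃ s : Set X, Dense s ∧ Cardinal.mk s = c }

/-! Were the conclusion false, choosing for each `n` a set `I n` of size `< κ` that fails
`ε = 1/(n+1)` gives a union `J` still of size `< κ` (as `cof κ > ℵ₀`) off which every element
of `X` vanishes. Such an `X` lies in the closure of the ℚ-span of the unit vectors indexed by
`J`, a set of size `≤ max |J| ℵ₀ < κ`, so `dens X < κ`. -/

open Cardinal

theorem Cardinal.mk_iUnion_nat_lt {α : Type u} {κ : Cardinal.{u}} (hκ : ℵ₀ < κ.ord.cof)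
    {s : ℕ → Set α} (hs : ∀ n, #(s n) < κ) : #(⋃ n, s n) < κ := by
  have hℵ₀κ : ℵ₀ < κ := hκ.trans_le (Ordinal.cof_ord_le κ)
  have hsup : ⨆ n, #(s n) < κ := lift_iSup_lt_of_lt_cof_ord (by simpa using hκ) hs
  have hunion := mk_iUnion_le_lift s
  simp only [lift_uzero, mk_nat, lift_aleph0] at hunion
  exact hunion.trans_lt (mul_lt_of_lt hℵ₀κ.le hℵ₀κ hsup)

theorem Cardinal.mk_span_rat_range_le {ι M : Type u} [AddCommGroup M] [Module ℚ M] (v : ι → M) :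
    #(Submodule.span ℚ (Set.range v)) ≤ max #ι ℵ₀ := by
  rw [← Finsupp.range_linearCombination]
  refine mk_range_le.trans ?_
  rcases isEmpty_or_nonempty ι with hι | hι
  · simp
  · simp [mk_finsupp_lift_of_infinite']

theorem densChar_le {X : Type*} [TopologicalSpace X] {s : Set X} (hs : Dense s) :
    densChar X ≤ #s :=
  csInf_le' ⟨s, hs, rfl⟩

theorem densChar_le_mk_mul_aleph0_of_subset_closure {E : Type*} [PseudoMetricSpace E]
    {S D : Set E} (hSD : S ⊆ closure D) : densChar S ≤ #D * ℵ₀ := by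
  let P := {q : D × ℕ // ∃ s : S, dist (s : E) q.1 < 1 / (q.2 + 1)}
  let f : P → S := fun q => q.2.choose
  have hf (q : P) : dist (f q : E) q.1.1 < 1 / (q.1.2 + 1) := q.2.choose_spec
  have hdense : DenseRange f := by
    refine Metric.denseRange_iff.2 fun s r hr => ?_
    obtain ⟨n, hn⟩ := exists_nat_one_div_lt (half_pos hr)
    obtain ⟨d, hd, hsd⟩ := Metric.mem_closure_iff.1 (hSD s.2) _ (Nat.one_div_pos_of_nat (n := n))
    let q : P := ⟨(⟨d, hd⟩, n), s, hsd⟩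
    have hq := hf q
    refine ⟨q, ?_⟩
    calc dist s (f q) ≤ dist (s : E) d + dist (f q : E) d := dist_triangle_right (s : E) (f q) d
      _ < r := by linarith
  calc densChar S ≤ #(Set.range f) := densChar_le hdense
    _ ≤ #P := mk_range_le
    _ ≤ #(D × ℕ) := mk_subtype_le _
    _ = #D * ℵ₀ := by simp

theorem Submodule.span_real_subset_closure_span_rat {E : Type*} [AddCommGroup E] [Module ℝ E]
    [Module ℚ E] [TopologicalSpace E] [ContinuousAdd E] [ContinuousSMul ℝ E]
    (s : Set E) : (span ℝ s : Set E) ⊆ closure (span ℚ s) := by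
  intro x hx
  induction hx using Submodule.span_induction with
  | mem y hy => exact subset_closure (subset_span hy)
  | zero => exact subset_closure (zero_mem _)
  | add y z _ _ hy hz => exact map_mem_closure₂ continuous_add hy hz fun a ha b hb => add_mem ha hb
  | smul r y _ hy =>
    refine map_mem_closure₂ continuous_smul (Rat.denseRange_cast r) hy ?_
    rintro _ ⟨q, rfl⟩ b hb
    rw [Rat.cast_smul_eq_qsmul]
    exact (span ℚ s).smul_mem q hb

section lpRestrict

variable {Γ : Type*} {p : ℝ≥0∞}

@[simp]
theorem lpRestrict_apply (x : lp (fun _ : Γ => ℝ) p) (J : Set Γ) (γ : Γ) :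
    lpRestrict x J γ = J.indicator x γ :=
  rfl

theorem lpRestrict_smul (c : ℝ) (x : lp (fun _ : Γ => ℝ) p) (J : Set Γ) :
    lpRestrict (c • x) J = c • lpRestrict x J := by
  ext γ
  by_cases hγ : γ ∈ J <;> simp [hγ]

theorem norm_lpRestrict_mono (hp : 0 < p.toReal) (x : lp (fun _ : Γ => ℝ) p) {A B : Set Γ}
    (hAB : A ⊆ B) : ‖lpRestrict x A‖ ≤ ‖lpRestrict x B‖ := by
  refine lp.norm_le_of_tsum_le (f := lpRestrict x A) hp (lp.norm_nonneg' _) ?_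
  rw [lp.norm_rpow_eq_tsum hp]
  refine Summable.tsum_le_tsum (fun γ => ?_) ((lp.memℓp _).summable hp)
    ((lp.memℓp _).summable hp)
  gcongr
  exact norm_indicator_le_of_subset hAB _ _

theorem apply_eq_zero_of_forall_norm_eq_one_lpRestrict_compl_eq_zero [Fact (1 ≤ p)]
    {X : Submodule ℝ (lp (fun _ : Γ => ℝ) p)} {J : Set Γ}
    (h : ∀ x ∈ X, ‖x‖ = 1 → lpRestrict x Jᶜ = 0) {x : lp (fun _ : Γ => ℝ) p} (hx : x ∈ X)
    {γ : Γ} (hγ : γ ∉ J) : x γ = 0 := by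
  rcases eq_or_ne x 0 with rfl | hx0
  · rfl
  have hnorm : ‖x‖ ≠ 0 := norm_ne_zero_iff.2 hx0
  have hunit := h _ (X.smul_mem ‖x‖⁻¹ hx) <| by
    rw [norm_smul, norm_inv, norm_norm, inv_mul_cancel₀ hnorm]
  have hrestrict : lpRestrict x Jᶜ = 0 := by
    rw [← smul_inv_smul₀ hnorm x, lpRestrict_smul, hunit, smul_zero]
  simpa [hγ] using congr($hrestrict γ)

end lpRestrict

theorem lp.mem_closure_span_single {Γ : Type*} {p : ℝ≥0∞} [Fact (1 ≤ p)] [DecidableEq Γ]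
    (hp : p ≠ ∞) {J : Set Γ} {x : lp (fun _ : Γ => ℝ) p} (hx : ∀ γ ∉ J, x γ = 0) :
    x ∈ closure (Submodule.span ℝ
      (Set.range fun j : J => lp.single (E := fun _ : Γ => ℝ) p j 1) : Set (lp _ p)) := by
  refine mem_closure_of_tendsto (lp.hasSum_single hp x) (Filter.Eventually.of_forall fun F => ?_)
  refine Submodule.sum_mem _ fun γ _ => ?_
  by_cases hγ : γ ∈ J
  · rw [← mul_one (x γ), ← smul_eq_mul, lp.single_smul]
    exact Submodule.smul_mem _ _ (Submodule.subset_span ⟨⟨γ, hγ⟩, rfl⟩)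
  · simp [hx γ hγ]

theorem densChar_le_of_forall_apply_eq_zero {Γ : Type u} {p : ℝ≥0∞} [Fact (1 ≤ p)] (hp : p ≠ ∞)
    (X : Submodule ℝ (lp (fun _ : Γ => ℝ) p)) {J : Set Γ} (hX : ∀ x ∈ X, ∀ γ ∉ J, x γ = 0) :
    densChar X ≤ max #J ℵ₀ := by
  classical
  let D := Submodule.span ℚ (Set.range fun j : J => lp.single (E := fun _ : Γ => ℝ) p j 1)
  have hXD : (X : Set (lp (fun _ : Γ => ℝ) p)) ⊆ closure D := fun x hx =>
    closure_minimal (Submodule.span_real_subset_closure_span_rat _) isClosed_closure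
      (lp.mem_closure_span_single hp (hX x hx))
  calc densChar X ≤ #D * ℵ₀ := densChar_le_mk_mul_aleph0_of_subset_closure hXD
    _ ≤ max #J ℵ₀ * ℵ₀ := by gcongr; exact mk_span_rat_range_le _
    _ = max #J ℵ₀ := mul_eq_left (le_max_right _ _) (le_max_right _ _) aleph0_ne_zero

theorem exists_uniform_tail_l1_general {Γ : Type u}
    (X : Submodule ℝ (lp (fun _ : Γ => ℝ) 1))
    (κ : Cardinal.{u}) (hκ : densChar X = κ)
    (hcof : Cardinal.aleph0 < (Cardinal.ord κ).cof) :
    ∃ ε : ℝ, 0 < ε ∧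
      ∀ I : Set Γ, Cardinal.mk I < κ →
        ∃ x : lp (fun _ : Γ => ℝ) 1, x ∈ X ∧ ‖x‖ = 1 ∧ ε < ‖lpRestrict x Iᶜ‖ := by
  by_contra! hcon
  choose I hIκ hI using fun n : ℕ => hcon (1 / (n + 1)) Nat.one_div_pos_of_nat
  set J := ⋃ n, I n
  have htail (x) (hx : x ∈ X) (hx1 : ‖x‖ = 1) : lpRestrict x Jᶜ = 0 := by
    refine norm_le_zero_iff.1 (ge_of_tendsto' tendsto_one_div_add_atTop_nhds_zero_nat fun n => ?_)
    exact (norm_lpRestrict_mono (by simp) x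
      (Set.compl_subset_compl.2 (Set.subset_iUnion I n))).trans (hI n x hx hx1)
  have hdens := densChar_le_of_forall_apply_eq_zero ENNReal.one_ne_top X fun x hx γ hγ =>
    apply_eq_zero_of_forall_norm_eq_one_lpRestrict_compl_eq_zero htail hx hγ
  exact (hdens.trans_lt (max_lt (mk_iUnion_nat_lt hcof hIκ)
    (hcof.trans_le (Ordinal.cof_ord_le κ)))).ne hκ

/-- If `X` is a closed subspace of `ℓ₁(Γ)` whose density character `κ` has uncountable
cofinality and satisfies `κ < |Γ|`, then there is `ε > 0` such that for every `I ⊆ Γ` with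
`|I| < κ` some normalized `x ∈ X` has `‖x·1_{Γ∖I}‖ > ε`. -/
theorem exists_uniform_tail_l1 {Γ : Type u}
    (X : Submodule ℝ (lp (fun _ : Γ => ℝ) 1))
    (hX : IsClosed (X : Set (lp (fun _ : Γ => ℝ) 1)))
    (κ : Cardinal.{u}) (hκ : densChar X = κ)
    (hcof : Cardinal.aleph0 < (Cardinal.ord κ).cof)
    (hκΓ : κ < Cardinal.mk Γ) :
    ∃ ε : ℝ, 0 < ε ∧
      ∀ I : Set Γ, Cardinal.mk I < κ →
        ∃ x : lp (fun _ : Γ => ℝ) 1, x ∈ X ∧ ‖x‖ = 1 ∧ ε < ‖lpRestrict x Iᶜ‖ :=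
  exists_uniform_tail_l1_general X κ hκ hcof
end
end

section
/- Let X be a Banach space with the separable complementation property whose density character equals ℵ₁. Then there exist a well-ordered index type ι of cardinality ℵ₁ in which every proper initial segment {j : j < i} is countable, and a monotone (increasing) family (X_i)_{i∈ι} of closed linear subspaces of X such that each X_i is separable, each X_i is the range of a continuous linear projection on X, and X = ⋃_{i∈ι} X_i. -/
open scoped ENNReal

noncomputable section

/-- A Banach space `X` has the separable complementation property (SCP) if every separable
closed subspace of `X` is contained in a separable closed subspace that is the range of a
continuous linear projection on `X`. -/
def HasSCP (X : Type*) [NormedAddCommGroup X] [NormedSpace ℝ X] : Prop :=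
  ∀ E : Submodule ℝ X, IsClosed (E : Set X) → TopologicalSpace.IsSeparable (E : Set X) →
    ∃ F : Submodule ℝ X, E ≤ F ∧ IsClosed (F : Set X) ∧
      TopologicalSpace.IsSeparable (F : Set X) ∧
      ∃ P : X →L[ℝ] X, P.comp P = P ∧ LinearMap.range (P : X →ₗ[ℝ] X) = F

/-- A Banach space `X` has the separable extension property (SEP) if for every separable closed
subspace `E` of `X` there is a continuous linear operator `T : X → X` with separable range
fixing `E` pointwise. -/
def HasSEP (X : Type*) [NormedAddCommGroup X] [NormedSpace ℝ X] : Prop :=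
  ∀ E : Submodule ℝ X, IsClosed (E : Set X) → TopologicalSpace.IsSeparable (E : Set X) →
    ∃ T : X →L[ℝ] X, TopologicalSpace.IsSeparable (Set.range T) ∧ ∀ x ∈ E, T x = x

/-! Enumerate a dense subset of cardinality `ℵ₁` as `(x i)` along `ω₁` and choose, by
transfinite recursion, `F i` to be a separable complemented subspace (given by the SCP)
containing `x i` and all `F j` with `j < i`; this is possible because initial segments of `ω₁`
are countable, so the union of the earlier `F j` is separable. As every countable subset of `ω₁`
is bounded, the increasing union of the closed `F i` is sequentially closed, and it contains a
dense set. -/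

open Set TopologicalSpace Cardinal

theorem Set.Countable.bddAbove_of_countable_Iio {ι : Type*} [LinearOrder ι] [Uncountable ι]
    (hcount : ∀ i : ι, (Iio i).Countable) {s : Set ι} (hs : s.Countable) : BddAbove s := by
  by_contra hunbdd
  have hcover : (univ : Set ι) ⊆ ⋃ a ∈ s, Iio a := fun j _ => by
    obtain ⟨a, ha, hja⟩ := not_bddAbove_iff.1 hunbdd j
    exact mem_biUnion ha hja
  exact not_countable_univ ((hs.biUnion fun a _ => hcount a).mono hcover)

theorem isSeqClosed_iUnion_of_monotone {X ι : Type*} [TopologicalSpace X] [Preorder ι]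
    {F : ι → Set X} (hmono : Monotone F) (hclosed : ∀ i, IsClosed (F i))
    (hbdd : ∀ u : ℕ → ι, BddAbove (range u)) : IsSeqClosed (⋃ i, F i) := by
  intro x a hx hlim
  choose idx hidx using fun n => mem_iUnion.1 (hx n)
  obtain ⟨b, hb⟩ := hbdd idx
  exact mem_iUnion.2 ⟨b, (hclosed b).mem_of_tendsto hlim
    (.of_forall fun n => hmono (hb (mem_range_self n)) (hidx n))⟩

theorem exists_denseRange_of_densChar_eq {X ι : Type u} [TopologicalSpace X]
    (h : densChar X = #ι) : ∃ x : ι → X, DenseRange x := by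
  obtain ⟨s, hs, hmk⟩ : ∃ s : Set X, Dense s ∧ #s = densChar X :=
    csInf_mem (s := {c | ∃ s : Set X, Dense s ∧ #s = c}) ⟨_, univ, dense_univ, rfl⟩
  obtain ⟨e⟩ := Cardinal.eq.1 (h.symm.trans hmk.symm)
  refine ⟨(↑) ∘ e, ?_⟩
  rwa [DenseRange, range_comp, e.range_eq_univ, image_univ, Subtype.range_coe]

theorem Cardinal.countable_Iio_toType_ord_aleph_one (i : (ℵ₁ : Cardinal.{u}).ord.ToType) :
    (Iio i).Countable := by
  have hmk : #(ℵ₁ : Cardinal.{u}).ord.ToType = ℵ₁ := mk_ord_toType _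
  rw [← le_aleph0_iff_set_countable, ← lt_aleph_one_iff]
  exact (mk_Iio_lt i (by rw [hmk, Ordinal.type_toType])).trans_eq hmk

section Complemented

variable {X : Type*} [NormedAddCommGroup X] [NormedSpace ℝ X]

def Submodule.IsSeparableComplemented (F : Submodule ℝ X) : Prop :=
  IsClosed (F : Set X) ∧ IsSeparable (F : Set X) ∧
    ∃ P : X →L[ℝ] X, P.comp P = P ∧ LinearMap.range (P : X →ₗ[ℝ] X) = F

namespace HasSCP

theorem exists_isSeparableComplemented_superset (hSCP : HasSCP X) {A : Set X}
    (hA : IsSeparable A) :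
    ∃ F : Submodule ℝ X, A ⊆ F ∧ F.IsSeparableComplemented := by
  obtain ⟨F, hle, hF⟩ := hSCP (Submodule.span ℝ A).topologicalClosure
    (Submodule.isClosed_topologicalClosure _) (hA.span (R := ℝ)).closure
  exact ⟨F, Submodule.subset_span.trans
    ((Submodule.le_topologicalClosure _).trans hle), hF⟩

-- `⊥` is a junk value: `hull` is only applied to separable sets.
open scoped Classical in
def hull (hSCP : HasSCP X) (A : Set X) : Submodule ℝ X :=
  if hA : IsSeparable A then (hSCP.exists_isSeparableComplemented_superset hA).choose else ⊥

theorem hull_spec (hSCP : HasSCP X) {A : Set X} (hA : IsSeparable A) :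
    A ⊆ hSCP.hull A ∧ (hSCP.hull A).IsSeparableComplemented := by
  rw [hull, dif_pos hA]
  exact (hSCP.exists_isSeparableComplemented_superset hA).choose_spec

variable {ι : Type*} [PartialOrder ι] [WellFoundedLT ι]

def filtration (hSCP : HasSCP X) (x : ι → X) : ι → Submodule ℝ X :=
  WellFoundedLT.fix fun i F => hSCP.hull (insert (x i) (⋃ j : Iio i, (F j j.2 : Set X)))

theorem filtration_eq (hSCP : HasSCP X) (x : ι → X) (i : ι) :
    hSCP.filtration x i =
      hSCP.hull (insert (x i) (⋃ j : Iio i, (hSCP.filtration x j : Set X))) :=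
  WellFoundedLT.fix_eq _ i

theorem filtration_spec (hSCP : HasSCP X) (hcount : ∀ i : ι, (Iio i).Countable) (x : ι → X)
    (i : ι) :
    insert (x i) (⋃ j : Iio i, (hSCP.filtration x j : Set X)) ⊆ hSCP.filtration x i ∧
      (hSCP.filtration x i).IsSeparableComplemented := by
  induction i using WellFoundedLT.induction with
  | _ i ih =>
    have : Countable (Iio i) := (hcount i).to_subtype
    have hsep : IsSeparable (insert (x i) (⋃ j : Iio i, (hSCP.filtration x j : Set X))) := by
      rw [insert_eq]
      exact (countable_singleton _).isSeparable.union
        (.iUnion fun j => (ih j j.2).2.2.1)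
    rw [filtration_eq]
    exact hSCP.hull_spec hsep

theorem monotone_filtration (hSCP : HasSCP X) (hcount : ∀ i : ι, (Iio i).Countable)
    (x : ι → X) : Monotone (hSCP.filtration x) := by
  intro j i hji
  obtain rfl | hlt := hji.eq_or_lt
  · exact le_rfl
  · exact fun a ha => (hSCP.filtration_spec hcount x i).1
      (mem_insert_of_mem _ (mem_iUnion.2 ⟨⟨j, hlt⟩, ha⟩))

theorem mem_filtration_self (hSCP : HasSCP X) (hcount : ∀ i : ι, (Iio i).Countable)
    (x : ι → X) (i : ι) : x i ∈ hSCP.filtration x i :=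
  (hSCP.filtration_spec hcount x i).1 (mem_insert _ _)

end HasSCP

end Complemented

theorem scp_filtration_of_densChar_aleph_one_general {X : Type v}
    [NormedAddCommGroup X] [NormedSpace ℝ X]
    (hSCP : HasSCP X) (hdens : densChar X = Cardinal.aleph 1) :
    ∃ (ι : Type v) (lo : LinearOrder ι),
      letI := lo
      IsWellOrder ι (· < ·) ∧
      Cardinal.mk ι = Cardinal.aleph 1 ∧
      (∀ i : ι, Set.Countable {j : ι | j < i}) ∧
      ∃ F : ι → Submodule ℝ X,
        Monotone F ∧
        (∀ i, IsClosed ((F i : Set X))) ∧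
        (∀ i, TopologicalSpace.IsSeparable ((F i : Set X))) ∧
        (∀ i, ∃ P : X →L[ℝ] X, P.comp P = P ∧ LinearMap.range (P : X →ₗ[ℝ] X) = F i) ∧
        (⋃ i, (F i : Set X)) = Set.univ := by
  let ι := (ℵ₁ : Cardinal.{v}).ord.ToType
  have hmk : #ι = ℵ₁ := mk_ord_toType _
  have hcount : ∀ i : ι, (Iio i).Countable := countable_Iio_toType_ord_aleph_one
  have : Uncountable ι := by
    rw [← aleph0_lt_mk_iff, hmk]
    exact aleph0_lt_aleph_one
  obtain ⟨x, hx⟩ := exists_denseRange_of_densChar_eq (hdens.trans hmk.symm)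
  have hF := hSCP.filtration_spec hcount x
  have hmono := hSCP.monotone_filtration hcount x
  refine ⟨ι, inferInstance, isWellOrder_lt, hmk, hcount, hSCP.filtration x, hmono,
    fun i => (hF i).2.1, fun i => (hF i).2.2.1, fun i => (hF i).2.2.2, ?_⟩
  have hclosed : IsClosed (⋃ i, (hSCP.filtration x i : Set X)) :=
    (isSeqClosed_iUnion_of_monotone (fun _ _ h => hmono h) (fun i => (hF i).2.1)
      fun u => (countable_range u).bddAbove_of_countable_Iio hcount).isClosed
  have hdense : Dense (⋃ i, (hSCP.filtration x i : Set X)) :=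
    hx.mono <| range_subset_iff.2 fun i =>
      mem_iUnion_of_mem i (hSCP.mem_filtration_self hcount x i)
  rw [← hclosed.closure_eq, hdense.closure_eq]

/-- A Banach space with the SCP and density character `ℵ₁` is the union of an increasing
`ω₁`-family of separable complemented closed subspaces, indexed by a well-ordered type of
cardinality `ℵ₁` all of whose proper initial segments are countable. -/
theorem scp_filtration_of_densChar_aleph_one {X : Type v}
    [NormedAddCommGroup X] [NormedSpace ℝ X] [CompleteSpace X]
    (hSCP : HasSCP X) (hdens : densChar X = Cardinal.aleph 1) :
    ∃ (ι : Type v) (lo : LinearOrder ι),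
      letI := lo
      IsWellOrder ι (· < ·) ∧
      Cardinal.mk ι = Cardinal.aleph 1 ∧
      (∀ i : ι, Set.Countable {j : ι | j < i}) ∧
      ∃ F : ι → Submodule ℝ X,
        Monotone F ∧
        (∀ i, IsClosed ((F i : Set X))) ∧
        (∀ i, TopologicalSpace.IsSeparable ((F i : Set X))) ∧
        (∀ i, ∃ P : X →L[ℝ] X, P.comp P = P ∧ LinearMap.range (P : X →ₗ[ℝ] X) = F i) ∧
        (⋃ i, (F i : Set X)) = Set.univ :=
  scp_filtration_of_densChar_aleph_one_general hSCP hdens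

end
end

section
/- Let A and B be real Banach spaces, let Φ : A → B be a homogeneous map (Φ(t·a) = t·Φ(a) for all t ∈ ℝ, a ∈ A) which is 1-linear with constant C ≥ 0, i.e., ‖Φ(∑_{k∈s} a_k) − ∑_{k∈s} Φ(a_k)‖ ≤ C ∑_{k∈s} ‖a_k‖ for every finite family (a_k)_{k∈s} in A. Let S ⊆ A be countable and let A_∞ be the linear span of S. Then there exist a countable set S' ⊆ A_∞, a constant M ≥ 0, and a homogeneous map Ψ : A_∞ → B which is 1-linear with some constant, such that: Ψ(a) = Φ(a) for every a ∈ S ∪ S'; ‖Ψ(a) − Φ(a)‖ ≤ M‖a‖ for every a ∈ A_∞; and Ψ(a) lies in the linear span of Φ(S ∪ S') for every a ∈ A_∞ (in particular the range of Ψ is contained in a separable subspace of B). -/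
/-!
Every `a ∈ span S` is a rational combination `d` of finitely many points `xᵢ ∈ S` plus a real
combination `∑ eᵢ xᵢ` of total size `∑ ‖eᵢ xᵢ‖ ≤ ‖a‖` (approximate the real coefficients of `a` by
rationals), so `‖d‖ ≤ 2‖a‖`. The rational combinations form a countable set `S'`, and
`1`-linearity gives `‖Φ a - (Φ d + ∑ eᵢ Φ xᵢ)‖ ≤ 3C‖a‖` with the approximant in `span Φ(S ∪ S')`.
Choosing such an approximant at one representative of each line through `0` (and `Φ` itself on
lines meeting `S ∪ S'`) and extending by homogeneity yields `Ψ`; being within `3C‖a‖` of `Φ`,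
it is again `1`-linear.
-/

open Set Submodule

/-- `1`-linearity with constant `C`, in the sense of the paper. -/
def QuasilinearWith {E F : Type*} [SeminormedAddCommGroup E] [SeminormedAddCommGroup F]
    (C : ℝ) (Φ : E → F) : Prop :=
  ∀ (s : Finset ℕ) (a : ℕ → E), ‖Φ (∑ k ∈ s, a k) - ∑ k ∈ s, Φ (a k)‖ ≤ C * ∑ k ∈ s, ‖a k‖

namespace QuasilinearWith

variable {E E' F : Type*} [SeminormedAddCommGroup E] [SeminormedAddCommGroup E']
  [SeminormedAddCommGroup F] {C : ℝ} {Φ : E → F}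

theorem norm_map_sum_fin_sub_le (hΦ : QuasilinearWith C Φ) {n : ℕ} (a : Fin n → E) :
    ‖Φ (∑ i, a i) - ∑ i, Φ (a i)‖ ≤ C * ∑ i, ‖a i‖ := by
  let b : ℕ → E := fun k => if h : k < n then a ⟨k, h⟩ else 0
  have hb : ∀ i : Fin n, b i = a i := fun i => dif_pos i.isLt
  simpa only [← Fin.sum_univ_eq_sum_range, hb] using hΦ (Finset.range n) b

theorem comp_linearIsometry {R : Type*} [Semiring R] [Module R E] [Module R E']
    (hΦ : QuasilinearWith C Φ) (f : E' →ₗᵢ[R] E) : QuasilinearWith C (Φ ∘ f) := by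
  intro s a
  simpa only [Function.comp_apply, map_sum, LinearIsometry.norm_map] using hΦ s (f ∘ a)

theorem of_norm_sub_le (hΦ : QuasilinearWith C Φ) {Ψ : E → F} {M : ℝ} (hM : 0 ≤ M)
    (hΨ : ∀ a, ‖Ψ a - Φ a‖ ≤ M * ‖a‖) : QuasilinearWith (C + 2 * M) Ψ := by
  intro s a
  have hsum : ‖∑ k ∈ s, a k‖ ≤ ∑ k ∈ s, ‖a k‖ := norm_sum_le _ _
  have hfar : ‖∑ k ∈ s, (Φ (a k) - Ψ (a k))‖ ≤ M * ∑ k ∈ s, ‖a k‖ := by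
    rw [Finset.mul_sum]
    refine (norm_sum_le _ _).trans (Finset.sum_le_sum fun k _ => ?_)
    rw [norm_sub_rev]
    exact hΨ (a k)
  calc ‖Ψ (∑ k ∈ s, a k) - ∑ k ∈ s, Ψ (a k)‖
      = ‖(Ψ (∑ k ∈ s, a k) - Φ (∑ k ∈ s, a k)) + (Φ (∑ k ∈ s, a k) - ∑ k ∈ s, Φ (a k))
          + ∑ k ∈ s, (Φ (a k) - Ψ (a k))‖ := by
        rw [Finset.sum_sub_distrib]; congr 1; abel
    _ ≤ M * ‖∑ k ∈ s, a k‖ + C * ∑ k ∈ s, ‖a k‖ + M * ∑ k ∈ s, ‖a k‖ :=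
        (norm_add₃_le ..).trans (add_le_add_three (hΨ _) (hΦ s a) hfar)
    _ ≤ M * ∑ k ∈ s, ‖a k‖ + C * ∑ k ∈ s, ‖a k‖ + M * ∑ k ∈ s, ‖a k‖ := by gcongr
    _ = (C + 2 * M) * ∑ k ∈ s, ‖a k‖ := by ring

end QuasilinearWith

theorem exists_homogeneous_eq_smul_apply {K E F : Type*} [Field K] [AddCommGroup E] [Module K E]
    [AddCommGroup F] [Module K F] (g : E → F) :
    ∃ Ψ : E → F, (∀ (t : K) (a : E), Ψ (t • a) = t • Ψ a) ∧
      ∀ a, ∃ (s : K) (z : E), a = s • z ∧ Ψ a = s • g z := by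
  classical
  have hrep : ∀ (v : E) (hv : v ≠ 0), ∃ s : K, v = s • (Projectivization.mk K v hv).rep := by
    intro v hv
    obtain ⟨u, hu⟩ := Projectivization.exists_smul_eq_mk_rep K v hv
    exact ⟨↑u⁻¹, (inv_smul_eq_iff.mpr hu.symm).symm⟩
  choose s hs using hrep
  refine ⟨fun a => if h : a = 0 then 0 else s a h • g (Projectivization.mk K a h).rep, ?_, ?_⟩
  · intro t a
    rcases eq_or_ne t 0 with rfl | ht
    · simp
    rcases eq_or_ne a 0 with rfl | ha
    · simp
    have hta : t • a ≠ 0 := smul_ne_zero ht ha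
    have hmk : Projectivization.mk K (t • a) hta = Projectivization.mk K a ha :=
      (Projectivization.mk_eq_mk_iff' K _ _ hta ha).mpr ⟨t, rfl⟩
    have hcoeff : s (t • a) hta = t * s a ha := by
      refine smul_left_injective K (Projectivization.mk K a ha).rep_nonzero ?_
      simp only [mul_smul, ← hs a ha]
      rw [← hmk, ← hs]
    simp only [dif_neg hta, dif_neg ha, hmk, hcoeff, mul_smul]
  · intro a
    by_cases ha : a = 0
    · exact ⟨0, a, by simp [ha], by simp [ha]⟩
    · exact ⟨s a ha, _, hs a ha, dif_neg ha⟩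

theorem exists_homogeneous_mem_of_approx {E F : Type*} [SeminormedAddCommGroup E]
    [NormedSpace ℝ E] [SeminormedAddCommGroup F] [NormedSpace ℝ F] {Φ : E → F}
    (hΦ : ∀ (t : ℝ) (a : E), Φ (t • a) = t • Φ a) {T : Set E} {W : Submodule ℝ F}
    (hTW : ∀ a ∈ T, Φ a ∈ W) {M : ℝ} (hM : 0 ≤ M)
    (happrox : ∀ a, ∃ y ∈ W, ‖y - Φ a‖ ≤ M * ‖a‖) :
    ∃ Ψ : E → F, (∀ (t : ℝ) (a : E), Ψ (t • a) = t • Ψ a) ∧ (∀ a ∈ T, Ψ a = Φ a) ∧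
      (∀ a, ‖Ψ a - Φ a‖ ≤ M * ‖a‖) ∧ ∀ a, Ψ a ∈ W := by
  classical
  choose y hyW hy using happrox
  let g : E → F := fun z => if ∃ t : ℝ, t ≠ 0 ∧ t • z ∈ T then Φ z else y z
  have hg_mem : ∀ z, g z ∈ W := by
    intro z
    by_cases h : ∃ t : ℝ, t ≠ 0 ∧ t • z ∈ T
    · rw [show g z = Φ z from if_pos h]
      obtain ⟨t, ht, htz⟩ := h
      have hz : Φ z = t⁻¹ • Φ (t • z) := by rw [hΦ, inv_smul_smul₀ ht]
      exact hz ▸ W.smul_mem t⁻¹ (hTW _ htz)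
    · simpa only [g, if_neg h] using hyW z
  have hg_near : ∀ z, ‖g z - Φ z‖ ≤ M * ‖z‖ := by
    intro z
    by_cases h : ∃ t : ℝ, t ≠ 0 ∧ t • z ∈ T
    · simp only [g, if_pos h, sub_self, norm_zero]
      positivity
    · simpa only [g, if_neg h] using hy z
  obtain ⟨Ψ, hΨhom, hΨ⟩ := exists_homogeneous_eq_smul_apply (K := ℝ) g
  refine ⟨Ψ, hΨhom, fun a ha => ?_, fun a => ?_, fun a => ?_⟩ <;>
    obtain ⟨s, z, rfl, hΨa⟩ := hΨ a
  · rw [hΨa, hΦ]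
    rcases eq_or_ne s 0 with rfl | hs
    · simp only [zero_smul]
    · rw [show g z = Φ z from if_pos ⟨s, hs, ha⟩]
  · rw [hΨa, hΦ, ← smul_sub, norm_smul, norm_smul]
    calc ‖s‖ * ‖g z - Φ z‖ ≤ ‖s‖ * (M * ‖z‖) := by gcongr; exact hg_near z
      _ = M * (‖s‖ * ‖z‖) := by ring
  · rw [hΨa]
    exact W.smul_mem s (hg_mem z)

def ratCombinations {E : Type*} [AddCommGroup E] [Module ℝ E] (S : Set E) : Set E :=
  ⋃ n : ℕ, range fun p : (Fin n → ℚ) × (Fin n → S) => ∑ i, (p.1 i : ℝ) • (p.2 i : E)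

section ratCombinations

variable {E : Type*}

theorem countable_ratCombinations [AddCommGroup E] [Module ℝ E] {S : Set E}
    (hS : S.Countable) : (ratCombinations S).Countable := by
  have := hS.to_subtype
  exact countable_iUnion fun n => countable_range _

theorem ratCombinations_subset_span [AddCommGroup E] [Module ℝ E] (S : Set E) :
    ratCombinations S ⊆ span ℝ S := by
  simp only [ratCombinations, iUnion_subset_iff, range_subset_iff]
  exact fun n p => sum_mem fun i _ => smul_mem _ _ (subset_span (p.2 i).2)

theorem exists_ratCombination_add_small [NormedAddCommGroup E] [NormedSpace ℝ E]
    {S : Set E} {a : E} (ha : a ∈ span ℝ S) :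
    ∃ d ∈ ratCombinations S, ∃ (n : ℕ) (e : Fin n → ℝ) (x : Fin n → S),
      a = d + ∑ i, e i • (x i : E) ∧ ∑ i, ‖e i • (x i : E)‖ ≤ ‖a‖ := by
  obtain ⟨n, c, x, rfl⟩ := mem_span_set'.mp ha
  by_cases h0 : ∑ i, c i • (x i : E) = 0
  · exact ⟨0, mem_iUnion.2 ⟨0, (Fin.elim0, Fin.elim0), by simp⟩, 0, Fin.elim0, Fin.elim0,
      by simpa using h0, by simp⟩
  let U : Set (Fin n → ℝ) := {c' | ∑ i, ‖(c i - c' i) • (x i : E)‖ < ‖∑ i, c i • (x i : E)‖}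
  have hU : IsOpen U := isOpen_lt (by fun_prop) continuous_const
  have hcU : c ∈ U := by
    simpa only [U, mem_ofPred_eq, sub_self, zero_smul, norm_zero, Finset.sum_const_zero]
      using norm_pos_iff.mpr h0
  obtain ⟨q, hq⟩ := (DenseRange.piMap fun _ => Rat.denseRange_cast).exists_mem_open hU ⟨c, hcU⟩
  refine ⟨∑ i, (q i : ℝ) • (x i : E), mem_iUnion.2 ⟨n, (q, x), rfl⟩, n,
    fun i => c i - q i, x, ?_, hq.le⟩
  simp only [sub_smul, Finset.sum_sub_distrib, add_sub_cancel]

end ratCombinations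

theorem exists_mem_span_image_norm_sub_le {E F : Type*} [NormedAddCommGroup E]
    [NormedSpace ℝ E] [SeminormedAddCommGroup F] [NormedSpace ℝ F] {Φ : E → F}
    (hΦhom : ∀ (t : ℝ) (a : E), Φ (t • a) = t • Φ a) {C : ℝ} (hC : 0 ≤ C)
    (hΦ : QuasilinearWith C Φ) {S : Set E} {a : E} (ha : a ∈ span ℝ S) :
    ∃ y ∈ span ℝ (Φ '' (S ∪ ratCombinations S)), ‖y - Φ a‖ ≤ 3 * C * ‖a‖ := by
  obtain ⟨d, hd, n, e, x, hdecomp, hsmall⟩ := exists_ratCombination_add_small ha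
  refine ⟨Φ d + ∑ i, e i • Φ (x i),
    add_mem (subset_span (mem_image_of_mem Φ (Or.inr hd)))
      (sum_mem fun i _ => smul_mem _ _ (subset_span (mem_image_of_mem Φ (Or.inl (x i).2)))), ?_⟩
  have hd_norm : ‖d‖ ≤ 2 * ‖a‖ := by
    have : d = a - ∑ i, e i • (x i : E) := eq_sub_of_add_eq hdecomp.symm
    rw [this]
    linarith [norm_sub_le a (∑ i, e i • (x i : E)), norm_sum_le Finset.univ
      fun i => e i • (x i : E)]
  have hlin := hΦ.norm_map_sum_fin_sub_le (Fin.cons d fun i => e i • (x i : E))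
  simp only [Fin.sum_univ_succ, Fin.cons_zero, Fin.cons_succ, hΦhom, ← hdecomp] at hlin
  rw [norm_sub_rev]
  calc _ ≤ C * (‖d‖ + ∑ i, ‖e i • (x i : E)‖) := hlin
    _ ≤ C * (2 * ‖a‖ + ‖a‖) := by gcongr
    _ = 3 * C * ‖a‖ := by ring

theorem quasilinear_separable_reduction_general {A B : Type*}
    [NormedAddCommGroup A] [NormedSpace ℝ A]
    [NormedAddCommGroup B] [NormedSpace ℝ B]
    (Φ : A → B) (hΦhom : ∀ (t : ℝ) (a : A), Φ (t • a) = t • Φ a)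
    (C : ℝ) (hC : 0 ≤ C)
    (hΦ : ∀ (s : Finset ℕ) (a : ℕ → A),
      ‖Φ (∑ k ∈ s, a k) - ∑ k ∈ s, Φ (a k)‖ ≤ C * ∑ k ∈ s, ‖a k‖)
    (S : Set A) (hS : S.Countable) :
    ∃ (S' : Set A) (M : ℝ) (Ψ : (Submodule.span ℝ S : Submodule ℝ A) → B),
      S' ⊆ (Submodule.span ℝ S : Set A) ∧ S'.Countable ∧ 0 ≤ M ∧
      (∀ (t : ℝ) (a : Submodule.span ℝ S), Ψ (t • a) = t • Ψ a) ∧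
      (∃ C' : ℝ, 0 ≤ C' ∧ ∀ (s : Finset ℕ) (a : ℕ → Submodule.span ℝ S),
        ‖Ψ (∑ k ∈ s, a k) - ∑ k ∈ s, Ψ (a k)‖ ≤ C' * ∑ k ∈ s, ‖a k‖) ∧
      (∀ a : Submodule.span ℝ S, (a : A) ∈ S ∪ S' → Ψ a = Φ a) ∧
      (∀ a : Submodule.span ℝ S, ‖Ψ a - Φ (a : A)‖ ≤ M * ‖a‖) ∧
      (∀ a : Submodule.span ℝ S, Ψ a ∈ Submodule.span ℝ (Φ '' (S ∪ S'))) := by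
  have hΦ₀ : QuasilinearWith C (Φ ∘ (span ℝ S).subtypeₗᵢ) :=
    QuasilinearWith.comp_linearIsometry hΦ _
  obtain ⟨Ψ, hΨhom, hΨagree, hΨnear, hΨmem⟩ :=
    exists_homogeneous_mem_of_approx (Φ := Φ ∘ (span ℝ S).subtypeₗᵢ)
      (T := (↑) ⁻¹' (S ∪ ratCombinations S)) (fun t a => hΦhom t a)
      (fun a ha => subset_span (mem_image_of_mem Φ ha)) (by positivity : 0 ≤ 3 * C)
      (fun a => exists_mem_span_image_norm_sub_le hΦhom hC hΦ a.2)
  exact ⟨ratCombinations S, 3 * C, Ψ, ratCombinations_subset_span S,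
    countable_ratCombinations hS, by positivity, hΨhom,
    ⟨C + 2 * (3 * C), by positivity, hΦ₀.of_norm_sub_le (by positivity) hΨnear⟩,
    hΨagree, hΨnear, hΨmem⟩

/-- Separable reduction for `1`-linear (quasilinear) maps: given a homogeneous `1`-linear map
`Φ : A → B` with constant `C` and a countable set `S ⊆ A` with linear span `A_∞`, there are a
countable `S' ⊆ A_∞`, a constant `M ≥ 0`, and a homogeneous `1`-linear map `Ψ : A_∞ → B` that
agrees with `Φ` on `S ∪ S'`, is at uniform distance at most `M` from `Φ` on `A_∞`, and takes
values in the span of `Φ(S ∪ S')` (hence in a separable subspace of `B`). -/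
theorem quasilinear_separable_reduction {A B : Type*}
    [NormedAddCommGroup A] [NormedSpace ℝ A] [CompleteSpace A]
    [NormedAddCommGroup B] [NormedSpace ℝ B] [CompleteSpace B]
    (Φ : A → B) (hΦhom : ∀ (t : ℝ) (a : A), Φ (t • a) = t • Φ a)
    (C : ℝ) (hC : 0 ≤ C)
    (hΦ : ∀ (s : Finset ℕ) (a : ℕ → A),
      ‖Φ (∑ k ∈ s, a k) - ∑ k ∈ s, Φ (a k)‖ ≤ C * ∑ k ∈ s, ‖a k‖)
    (S : Set A) (hS : S.Countable) :
    ∃ (S' : Set A) (M : ℝ) (Ψ : (Submodule.span ℝ S : Submodule ℝ A) → B),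
      S' ⊆ (Submodule.span ℝ S : Set A) ∧ S'.Countable ∧ 0 ≤ M ∧
      (∀ (t : ℝ) (a : Submodule.span ℝ S), Ψ (t • a) = t • Ψ a) ∧
      (∃ C' : ℝ, 0 ≤ C' ∧ ∀ (s : Finset ℕ) (a : ℕ → Submodule.span ℝ S),
        ‖Ψ (∑ k ∈ s, a k) - ∑ k ∈ s, Ψ (a k)‖ ≤ C' * ∑ k ∈ s, ‖a k‖) ∧
      (∀ a : Submodule.span ℝ S, (a : A) ∈ S ∪ S' → Ψ a = Φ a) ∧
      (∀ a : Submodule.span ℝ S, ‖Ψ a - Φ (a : A)‖ ≤ M * ‖a‖) ∧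
      (∀ a : Submodule.span ℝ S, Ψ a ∈ Submodule.span ℝ (Φ '' (S ∪ S'))) :=
  quasilinear_separable_reduction_general Φ hΦhom C hC hΦ S hS
end
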